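/- arXiv:2202.09675 — 10 statements merged into one kernel-verified Lean document; each statement's English description precedes it below -/
import Mathlib

section
/- If X is a code over alphabet A (i.e., every word in X* has a unique factorization into elements of X), then the submonoid X* is stable: for all words u, v, x in A*, if u, v, ux, and xv all belong to X*, then x belongs to X*. -/
/-- The submonoid `X*` generated by a set of words `X`: words admitting a
factorization into elements of `X`. -/
def starOf {A : Type*} (X : Set (List A)) : Set (List A) :=
  {u | ∃ l : List (List A), (∀ w ∈ l, w ∈ X) ∧ l.flatten = u}

/-- `X` is a code: every word of `X*` has a unique factorization into elements of `X`. -/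
def IsCode {A : Type*} (X : Set (List A)) : Prop :=
  ∀ l m : List (List A), (∀ w ∈ l, w ∈ X) → (∀ w ∈ m, w ∈ X) →
    l.flatten = m.flatten → l = m

/-- If `X` is a code, then `X*` is stable: if `u, v, ux, xv ∈ X*` then `x ∈ X*`. -/
theorem star_stable_of_isCode {A : Type*} (X : Set (List A)) (hX : IsCode X)
    (u v x : List A) (hu : u ∈ starOf X) (hv : v ∈ starOf X)
    (hux : u ++ x ∈ starOf X) (hxv : x ++ v ∈ starOf X) : x ∈ starOf X := by
  obtain ⟨lu, hlu, hlu'⟩ := hu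
  obtain ⟨lv, hlv, hlv'⟩ := hv
  obtain ⟨lux, hlux, hlux'⟩ := hux
  obtain ⟨lxv, hlxv, hlxv'⟩ := hxv
  have h : lu ++ lxv = lux ++ lv := by
    apply hX
    · intro w hw; rcases List.mem_append.mp hw with h | h
      · exact hlu w h
      · exact hlxv w h
    · intro w hw; rcases List.mem_append.mp hw with h | h
      · exact hlux w h
      · exact hlv w h
    · simp [List.flatten_append, hlu', hlxv', hlux', hlv', List.append_assoc]
  rcases List.append_eq_append_iff.mp h with ⟨a, ha1, _⟩ | ⟨c, hc1, _⟩
  · refine ⟨a, fun w hw => hlux w (ha1 ▸ List.mem_append_right _ hw), ?_⟩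
    subst hlu'
    have hfl : lu.flatten ++ a.flatten = lu.flatten ++ x := by
      rw [← List.flatten_append, ← ha1, hlux']
    exact List.append_cancel_left hfl
  · subst hlu'
    have hfl : lu.flatten ++ (x ++ c.flatten) = lu.flatten ++ [] := by
      rw [List.append_nil, ← List.append_assoc, ← hlux', ← List.flatten_append, ← hc1]
    have hx : x = [] := (List.append_eq_nil_iff.mp (List.append_cancel_left hfl)).1
    exact ⟨[], by simp, by simp [hx]⟩
end

section
/- Let A = {a, b} be a two-letter alphabet and let X be a subset of a*ba* (words of the form a^i b a^j). If X ∪ {a^n} is a code, then Card(X) ≤ n. -/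
/-!
Give the letters Bernoulli weights in which `b` has probability `ε`. McMillan's counting
argument shows that the weights of the words of any code sum to at most `1`. In
`X ∪ {aⁿ}` the word `aⁿ` weighs `(1 - ε)ⁿ ≥ 1 - nε`, while each `aⁱbaʲ` weighs
`ε (1 - ε)^(i+j) ≈ ε`; so `n + 1` words of `X` would push the total to about `1 + ε > 1`
for small `ε`.
-/

open Finset Filter

lemma le_one_of_forall_pow_le_mul {K C : ℝ} (h : ∀ r : ℕ, 1 ≤ r → K ^ r ≤ r * C) : K ≤ 1 := by
  by_contra! hK
  have hlim := (tendsto_pow_const_div_const_pow_of_one_lt 1 hK).const_mul C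
  rw [mul_zero] at hlim
  obtain ⟨r, hr⟩ := eventually_atTop.1 (hlim.eventually (gt_mem_nhds one_pos))
  have hsmall := hr (r + 1) (Nat.le_succ r)
  rw [pow_one, ← mul_div_assoc, div_lt_one (by positivity)] at hsmall
  have hlarge := h (r + 1) (Nat.le_add_left 1 r)
  push_cast at hsmall hlarge
  linarith

namespace InformationTheory

variable {α : Type*}

lemma UniquelyDecodable.mono {S T : Set (List α)} (hT : UniquelyDecodable T) (hST : S ⊆ T) :
    UniquelyDecodable S :=
  fun l m hl hm h => hT l m (fun w hw => hST (hl w hw)) (fun w hw => hST (hm w hw)) h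

def wordWeight (μ : α → ℝ) (w : List α) : ℝ :=
  (w.map μ).prod

section wordWeight

variable (μ : α → ℝ)

lemma wordWeight_append (u v : List α) :
    wordWeight μ (u ++ v) = wordWeight μ u * wordWeight μ v := by
  simp [wordWeight]

lemma wordWeight_flatten (l : List (List α)) :
    wordWeight μ l.flatten = (l.map (wordWeight μ)).prod := by
  induction l with
  | nil => rfl
  | cons w l ih => rw [List.flatten_cons, wordWeight_append, ih, List.map_cons, List.prod_cons]

lemma wordWeight_replicate (n : ℕ) (a : α) : wordWeight μ (List.replicate n a) = μ a ^ n := by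
  simp [wordWeight]

lemma wordWeight_ofFn {s : ℕ} (f : Fin s → α) : wordWeight μ (List.ofFn f) = ∏ i, μ (f i) := by
  simp [wordWeight, List.map_ofFn, List.prod_ofFn]

variable {μ}

lemma wordWeight_nonneg (hμ : ∀ a, 0 ≤ μ a) (w : List α) : 0 ≤ wordWeight μ w :=
  List.prod_nonneg fun _ hx => by
    obtain ⟨a, -, rfl⟩ := List.mem_map.1 hx
    exact hμ a

variable [Fintype α]

lemma sum_wordWeight_filter_length_le_one (hμ : ∀ a, 0 ≤ μ a) (hμ_sum : ∑ a, μ a = 1)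
    (T : Finset (List α)) (s : ℕ) : ∑ x ∈ T with x.length = s, wordWeight μ x ≤ 1 := by
  classical
  calc ∑ x ∈ T with x.length = s, wordWeight μ x
      ≤ ∑ x ∈ univ.image (List.ofFn (n := s) (α := α)), wordWeight μ x := by
        refine sum_le_sum_of_subset_of_nonneg (fun x hx => ?_) fun x _ _ => wordWeight_nonneg hμ x
        obtain ⟨-, rfl⟩ := mem_filter.1 hx
        exact mem_image.2 ⟨x.get, mem_univ _, List.ofFn_get x⟩
    _ = ∑ f : Fin s → α, ∏ i, μ (f i) := by
        rw [sum_image List.ofFn_injective.injOn]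
        simp only [wordWeight_ofFn]
    _ = 1 := by rw [← Fintype.sum_pow, hμ_sum, one_pow]

lemma UniquelyDecodable.sum_wordWeight_pow_le (hμ : ∀ a, 0 ≤ μ a) (hμ_sum : ∑ a, μ a = 1)
    {S : Finset (List α)} (hS : UniquelyDecodable (S : Set (List α))) {r : ℕ} (hr : 1 ≤ r) :
    (∑ w ∈ S, wordWeight μ w) ^ r ≤ r * S.sup List.length := by
  classical
  -- The `r`-fold concatenations of codewords are distinct words with lengths in `[1, r M]`,
  -- and the words of a given length weigh at most `1` in total.
  set M := S.sup List.length
  let concat : (Fin r → S) → List α := fun v => (List.ofFn fun i => (v i).val).flatten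
  have concat_injective : Function.Injective concat := fun v v' hv => by
    have := List.ofFn_injective (hS _ _ (by simp) (by simp) hv)
    exact funext fun i => Subtype.ext (congrFun this i)
  have length_concat (v) : (concat v).length = ∑ i, (v i).val.length := by
    simp [concat, List.sum_ofFn]
  have length_mem_Icc : ∀ x ∈ univ.image concat, x.length ∈ Icc 1 (r * M) := by
    simp only [mem_image, mem_univ, true_and, forall_exists_index]
    rintro _ v rfl
    rw [length_concat, mem_Icc]
    constructor
    · have hne : (v ⟨0, hr⟩).val ≠ [] := fun h => hS.epsilon_not_mem (h ▸ (v ⟨0, hr⟩).prop)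
      exact (List.length_pos_iff.2 hne).trans_le
        (single_le_sum (f := fun i => (v i).val.length) (by simp) (mem_univ _))
    · calc ∑ i, (v i).val.length ≤ ∑ _i : Fin r, M := sum_le_sum fun i _ => le_sup (v i).prop
        _ = r * M := by simp
  calc (∑ w ∈ S, wordWeight μ w) ^ r = ∑ v : Fin r → S, wordWeight μ (concat v) := by
        rw [← sum_coe_sort, Fintype.sum_pow]
        simp [concat, wordWeight_flatten, List.map_ofFn, List.prod_ofFn]
    _ = ∑ x ∈ univ.image concat, wordWeight μ x := (sum_image concat_injective.injOn).symm
    _ = ∑ s ∈ Icc 1 (r * M), ∑ x ∈ univ.image concat with x.length = s, wordWeight μ x :=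
        (sum_fiberwise_of_maps_to length_mem_Icc _).symm
    _ ≤ ∑ s ∈ Icc 1 (r * M), 1 :=
        sum_le_sum fun s _ => sum_wordWeight_filter_length_le_one hμ hμ_sum _ s
    _ = r * M := by simp

end wordWeight

theorem UniquelyDecodable.sum_wordWeight_le_one [Fintype α] {μ : α → ℝ} (hμ : ∀ a, 0 ≤ μ a)
    (hμ_sum : ∑ a, μ a = 1) {S : Finset (List α)} (hS : UniquelyDecodable (S : Set (List α))) :
    ∑ w ∈ S, wordWeight μ w ≤ 1 :=
  le_one_of_forall_pow_le_mul fun _ hr => hS.sum_wordWeight_pow_le hμ hμ_sum hr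

end InformationTheory

open InformationTheory

lemma Set.finite_and_ncard_le_of_forall_finset_card_le {β : Type*} {s : Set β} {n : ℕ}
    (h : ∀ t : Finset β, ↑t ⊆ s → #t ≤ n) : s.Finite ∧ s.ncard ≤ n := by
  have hs : s.Finite := by
    by_contra hs
    obtain ⟨t, hts, ht⟩ := Set.Infinite.exists_subset_card_eq hs (n + 1)
    have := h t hts
    omega
  refine ⟨hs, ?_⟩
  rw [Set.ncard_eq_toFinset_card s hs]
  exact h hs.toFinset (by simp)

/-- Letter weights on `{a, b}` (`a = true`) in which `b` has probability `ε`. -/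
def rareB (ε : ℝ) : Bool → ℝ := fun c => if c then 1 - ε else ε

section rareB

variable {ε : ℝ}

lemma rareB_nonneg (hε₀ : 0 ≤ ε) (hε₁ : ε ≤ 1) (c : Bool) : 0 ≤ rareB ε c := by
  cases c <;> simp [rareB] <;> linarith

lemma sum_rareB (ε : ℝ) : ∑ c, rareB ε c = 1 := by
  simp [rareB]

lemma one_sub_mul_le_wordWeight_replicate (hε₁ : ε ≤ 1) (n : ℕ) :
    1 - n * ε ≤ wordWeight (rareB ε) (List.replicate n true) := by
  rw [wordWeight_replicate]
  simpa [rareB, sub_eq_add_neg] using one_add_mul_le_pow (a := -ε) (by linarith) n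

lemma mul_one_sub_mul_le_wordWeight_bayonet (hε₀ : 0 ≤ ε) (hε₁ : ε ≤ 1) {i j M : ℕ}
    (hijM : i + j ≤ M) : ε * (1 - M * ε) ≤
      wordWeight (rareB ε) (List.replicate i true ++ [false] ++ List.replicate j true) := by
  have hweight : wordWeight (rareB ε) (List.replicate i true ++ [false] ++ List.replicate j true)
      = ε * (1 - ε) ^ (i + j) := by
    simp [wordWeight, rareB]
    ring
  rw [hweight]
  refine mul_le_mul_of_nonneg_left ?_ hε₀
  calc 1 - M * ε ≤ (1 - ε) ^ M := by
        simpa [sub_eq_add_neg] using one_add_mul_le_pow (a := -ε) (by linarith) M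
    _ ≤ (1 - ε) ^ (i + j) := pow_le_pow_of_le_one (by linarith) (by linarith) hijM

end rareB

theorem card_le_of_uniquelyDecodable_insert_replicate {n : ℕ} {Y : Finset (List Bool)}
    (hY : ∀ y ∈ Y, ∃ i j : ℕ, y = List.replicate i true ++ [false] ++ List.replicate j true)
    (hcode : UniquelyDecodable (↑(insert (List.replicate n true) Y) : Set (List Bool))) :
    #Y ≤ n := by
  by_contra! hcard
  set M := Y.sup List.length
  set ε : ℝ := 1 / ((n + 1) * M + 1)
  have hε₀ : 0 < ε := by positivity
  have hε₁ : ε ≤ 1 :=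
    div_le_one_of_le₀ (by nlinarith [Nat.cast_nonneg (α := ℝ) M]) (by positivity)
  have hMε : (n + 1) * M * ε < 1 := by
    rw [mul_one_div, div_lt_one (by positivity)]
    exact lt_add_one _
  have han : List.replicate n true ∉ Y := fun h => by
    obtain ⟨i, j, hij⟩ := hY _ h
    simpa using congrArg (false ∈ ·) hij
  have hbayonets : (n + 1) * (ε * (1 - M * ε)) ≤ ∑ y ∈ Y, wordWeight (rareB ε) y := by
    have hterm : 0 ≤ ε * (1 - M * ε) :=
      mul_nonneg hε₀.le (by nlinarith [Nat.cast_nonneg (α := ℝ) M])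
    calc (n + 1) * (ε * (1 - M * ε)) ≤ #Y * (ε * (1 - M * ε)) := by
          gcongr; exact_mod_cast hcard
      _ ≤ ∑ y ∈ Y, wordWeight (rareB ε) y := by
          rw [← nsmul_eq_mul]
          refine card_nsmul_le_sum _ _ _ fun y hy => ?_
          obtain ⟨i, j, rfl⟩ := hY y hy
          refine mul_one_sub_mul_le_wordWeight_bayonet hε₀.le hε₁ ?_
          have := le_sup (f := List.length) hy
          simp only [List.length_append, List.length_replicate, List.length_singleton] at this
          omega
  have hkraft := hcode.sum_wordWeight_le_one (rareB_nonneg hε₀.le hε₁) (sum_rareB ε)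
  rw [sum_insert han] at hkraft
  nlinarith [one_sub_mul_le_wordWeight_replicate hε₁ n, mul_pos hε₀ (sub_pos.2 hMε)]

/-- Over the two-letter alphabet `{a, b}` (here `a := true`, `b := false`),
if `X ⊆ a*ba*` and `X ∪ {a^n}` is a code, then `Card(X) ≤ n`. -/
theorem card_le_of_bayonet_code (n : ℕ) (X : Set (List Bool))
    (hX : ∀ x ∈ X, ∃ i j : ℕ,
      x = List.replicate i true ++ [false] ++ List.replicate j true)
    (hcode : IsCode (X ∪ {List.replicate n true})) :
    X.Finite ∧ X.ncard ≤ n := by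
  refine Set.finite_and_ncard_le_of_forall_finset_card_le fun Y hYX => ?_
  refine card_le_of_uniquelyDecodable_insert_replicate (fun y hy => hX y (hYX hy)) ?_
  refine UniquelyDecodable.mono hcode ?_
  rw [coe_insert, Set.union_singleton]
  exact Set.insert_subset_insert hYX
end

section
/- For any nonempty subset S of A+, the set X = A*S \ A*SA+ is a maximal prefix code over A. -/
/-- `X` is a prefix code: no empty word, and no word of `X` is a proper prefix of
another word of `X`. -/
def IsPrefixCode {A : Type*} (X : Set (List A)) : Prop :=
  (∀ x ∈ X, x ≠ []) ∧ ∀ x ∈ X, ∀ y ∈ X, x <+: y → x = y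

/-- The semaphore code `A*S \ A*SA+` determined by a set `S` of nonempty words:
words having a suffix in `S` but no other occurrence of a factor of `S` followed by
a nonempty word. -/
def semaphoreCode {A : Type*} (S : Set (List A)) : Set (List A) :=
  {x | (∃ u s, s ∈ S ∧ x = u ++ s) ∧ ¬∃ u s v, s ∈ S ∧ v ≠ [] ∧ x = u ++ s ++ v}

/-- Any word in `A*S` has a prefix in the semaphore code. -/
lemma semaphore_prefix_aux {A : Type*} (S : Set (List A)) :
    ∀ n (x : List A), x.length ≤ n → (∃ u s, s ∈ S ∧ x = u ++ s) →
      ∃ p ∈ semaphoreCode S, p <+: x := by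
  intro n
  induction n with
  | zero =>
    intro x hlen hx
    by_cases hmem : x ∈ semaphoreCode S
    · exact ⟨x, hmem, List.prefix_refl x⟩
    · exfalso
      apply hmem
      refine ⟨hx, ?_⟩
      rintro ⟨u, s, v, hs, hv, rfl⟩
      simp at hlen
      exact hv hlen.2.2
  | succ n ih =>
    intro x hlen hx
    by_cases hmem : x ∈ semaphoreCode S
    · exact ⟨x, hmem, List.prefix_refl x⟩
    · have : ∃ u s v, s ∈ S ∧ v ≠ [] ∧ x = u ++ s ++ v := by
        by_contra h
        exact hmem ⟨hx, h⟩
      obtain ⟨u, s, v, hs, hv, rfl⟩ := this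
      have hlen' : (u ++ s).length ≤ n := by
        have : v.length ≥ 1 := by
          cases v with
          | nil => exact absurd rfl hv
          | cons a t => simp
        simp at hlen ⊢
        omega
      obtain ⟨p, hp, hpre⟩ := ih (u ++ s) hlen' ⟨u, s, hs, rfl⟩
      exact ⟨p, hp, hpre.trans (by simp)⟩

/-- For any nonempty subset `S` of `A⁺`, the set `X = A*S \ A*SA⁺` is a maximal
prefix code over `A`. -/
theorem semaphore_maximal_prefix {A : Type*} (S : Set (List A))
    (hne : S.Nonempty) (hS : ∀ s ∈ S, s ≠ []) :
    IsPrefixCode (semaphoreCode S) ∧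
      ∀ Y : Set (List A), IsPrefixCode Y → semaphoreCode S ⊆ Y →
        Y = semaphoreCode S := by
  constructor
  · constructor
    · rintro x ⟨⟨u, s, hs, rfl⟩, -⟩ hnil
      exact hS s hs (by simpa using (List.append_eq_nil_iff.mp hnil).2)
    · rintro x ⟨⟨u, s, hs, rfl⟩, -⟩ y ⟨-, hy2⟩ ⟨v, rfl⟩
      by_cases hv : v = []
      · simp [hv]
      · exact absurd ⟨u, s, v, hs, hv, rfl⟩ hy2
  · intro Y hY hXY
    apply Set.Subset.antisymm _ hXY
    intro y hyY
    by_contra hyX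
    obtain ⟨s, hs⟩ := hne
    obtain ⟨p, hpX, hpre⟩ := semaphore_prefix_aux S (y ++ s).length (y ++ s) le_rfl
      ⟨y, s, hs, rfl⟩
    have hypre : y <+: y ++ s := ⟨s, rfl⟩
    rcases List.prefix_or_prefix_of_prefix hpre hypre with h | h
    · have := hY.2 p (hXY hpX) y hyY h
      exact hyX (this ▸ hpX)
    · have := hY.2 y hyY p (hXY hpX) h
      exact hyX (this ▸ hpX)
end

section
/- Let X be a code over A with a^n ∈ X, let B = A \ {a}, and let w ∈ B(a*B)*. Define X_w = a*wa* ∩ [X* \ (a^n X* ∪ X* a^n)]. Then for any pair (i,j) with 0 ≤ i,j ≤ n−1, there exists at most one pair (r,v) with r ≡ i (mod n) and v ≡ j (mod n) such that a^r w a^v ∈ X_w. -/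
/-- `X_w = a*wa* ∩ [X* \ (a^n X* ∪ X* a^n)]`. -/
def Xw {A : Type*} (X : Set (List A)) (a : A) (n : ℕ) (w : List A) : Set (List A) :=
  {x | (∃ r v : ℕ, x = List.replicate r a ++ w ++ List.replicate v a) ∧
    x ∈ starOf X ∧
    (¬∃ y ∈ starOf X, x = List.replicate n a ++ y) ∧
    (¬∃ y ∈ starOf X, x = y ++ List.replicate n a)}

open List

section ReplicatePadding

variable {α : Type*} {c : α} {l l' : List α}

theorem replicate_append_inj_of_head?_ne (h : l.head? ≠ some c) (h' : l'.head? ≠ some c) :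
    ∀ {p p' : ℕ}, replicate p c ++ l = replicate p' c ++ l' → p = p'
  | 0, 0, _ => rfl
  | 0, _ + 1, heq => (h (by simpa [replicate_succ] using congrArg head? heq)).elim
  | _ + 1, 0, heq => (h' (by simpa [replicate_succ] using (congrArg head? heq).symm)).elim
  | _ + 1, _ + 1, heq =>
    congrArg (· + 1) (replicate_append_inj_of_head?_ne h h' (by simpa [replicate_succ] using heq))

theorem append_replicate_inj_of_getLast?_ne (h : l.getLast? ≠ some c)
    (h' : l'.getLast? ≠ some c) {s s' : ℕ} (heq : l ++ replicate s c = l' ++ replicate s' c) :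
    s = s' := by
  refine replicate_append_inj_of_head?_ne (c := c) (l := l.reverse) (l' := l'.reverse) ?_ ?_ ?_
  · rwa [head?_reverse]
  · rwa [head?_reverse]
  · simpa using congrArg reverse heq

theorem replicate_append_append_replicate_inj (hne : l ≠ []) (hne' : l' ≠ [])
    (hhead : l.head? ≠ some c) (hhead' : l'.head? ≠ some c)
    (hlast : l.getLast? ≠ some c) (hlast' : l'.getLast? ≠ some c) {p s p' s' : ℕ}
    (heq : replicate p c ++ l ++ replicate s c = replicate p' c ++ l' ++ replicate s' c) :
    p = p' ∧ s = s' := by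
  rw [append_assoc, append_assoc] at heq
  have hp : p = p' := replicate_append_inj_of_head?_ne
    (by rwa [head?_append_of_ne_nil _ hne]) (by rwa [head?_append_of_ne_nil _ hne']) heq
  subst hp
  exact ⟨rfl, append_replicate_inj_of_getLast?_ne hlast hlast' (append_cancel_left heq)⟩

theorem forall_mem_replicate_append_append_replicate {S : Set α} (hc : c ∈ S)
    (hl : ∀ u ∈ l, u ∈ S) (p s : ℕ) :
    ∀ u ∈ replicate p c ++ l ++ replicate s c, u ∈ S := by
  simp only [mem_append, mem_replicate]
  rintro u ((⟨-, rfl⟩ | hu) | ⟨-, rfl⟩)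
  exacts [hc, hl u hu, hc]

end ReplicatePadding

section Factorization

variable {A : Type*} {X : Set (List A)} {a : A} {n : ℕ} {w : List A}

theorem exists_factorization_of_mem_Xw (hw : w ≠ []) {x : List A} (hx : x ∈ Xw X a n w) :
    ∃ l : List (List A), (∀ u ∈ l, u ∈ X) ∧ l.flatten = x ∧ l ≠ [] ∧
      l.head? ≠ some (replicate n a) ∧ l.getLast? ≠ some (replicate n a) := by
  obtain ⟨⟨r, v, rfl⟩, ⟨l, hlX, hlx⟩, hleft, hright⟩ := hx
  refine ⟨l, hlX, hlx, ?_, ?_, ?_⟩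
  · rintro rfl
    exact hw (by simp_all)
  · intro h
    obtain ⟨t, rfl⟩ := head?_eq_some_iff.mp h
    exact hleft
      ⟨t.flatten, ⟨t, fun u hu => hlX u (mem_cons_of_mem _ hu), rfl⟩, by simp [← hlx]⟩
  · intro h
    obtain ⟨t, rfl⟩ := getLast?_eq_some_iff.mp h
    exact hright ⟨t.flatten, ⟨t, fun u hu => hlX u (by simp [hu]), rfl⟩, by simp [← hlx]⟩

end Factorization

theorem Xw_unique_residues_general {A : Type*} (X : Set (List A)) (a : A) (n : ℕ)
    (hcode : IsCode X) (han : List.replicate n a ∈ X)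
    (w : List A) (hw : w ≠ []) :
    ∀ r v r' v' : ℕ, r % n = r' % n → v % n = v' % n →
      List.replicate r a ++ w ++ List.replicate v a ∈ Xw X a n w →
      List.replicate r' a ++ w ++ List.replicate v' a ∈ Xw X a n w →
      r = r' ∧ v = v' := by
  intro r v r' v' hr hv hx hx'
  obtain ⟨l, hlX, hlx, hne, hhead, hlast⟩ := exists_factorization_of_mem_Xw hw hx
  obtain ⟨l', hlX', hlx', hne', hhead', hlast'⟩ := exists_factorization_of_mem_Xw hw hx'
  have hpad : replicate (r' / n) (replicate n a) ++ l ++ replicate (v' / n) (replicate n a) =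
      replicate (r / n) (replicate n a) ++ l' ++ replicate (v / n) (replicate n a) := by
    refine hcode _ _ (forall_mem_replicate_append_append_replicate han hlX _ _)
      (forall_mem_replicate_append_append_replicate han hlX' _ _) ?_
    have hleft : r' / n * n + r = r / n * n + r' := by
      have := Nat.div_add_mod' r n; have := Nat.div_add_mod' r' n; omega
    have hright : v + v' / n * n = v' + v / n * n := by
      have := Nat.div_add_mod' v n; have := Nat.div_add_mod' v' n; omega
    calc _ = replicate (r' / n * n + r) a ++ w ++ replicate (v + v' / n * n) a := by
          simp only [flatten_append, flatten_replicate_replicate, hlx, replicate_add, append_assoc]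
      _ = replicate (r / n * n + r') a ++ w ++ replicate (v' + v / n * n) a := by
          rw [hleft, hright]
      _ = _ := by
          simp only [flatten_append, flatten_replicate_replicate, hlx', replicate_add, append_assoc]
  obtain ⟨hp, hs⟩ :=
    replicate_append_append_replicate_inj hne hne' hhead hhead' hlast hlast' hpad
  exact ⟨Nat.ext_div_mod hp.symm hr, Nat.ext_div_mod hs.symm hv⟩

/-- Let `X` be a code with `a^n ∈ X` and let `w` be a nonempty word whose first and
last letters differ from `a`.  For any residues `i, j` mod `n` there is at most one
pair `(r, v)` with `r ≡ i`, `v ≡ j (mod n)` and `a^r w a^v ∈ X_w`. -/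
theorem Xw_unique_residues {A : Type*} (X : Set (List A)) (a : A) (n : ℕ)
    (hcode : IsCode X) (han : List.replicate n a ∈ X)
    (w : List A) (hw : w ≠ []) (hhead : w.head hw ≠ a) (hlast : w.getLast hw ≠ a) :
    ∀ r v r' v' : ℕ, r % n = r' % n → v % n = v' % n →
      List.replicate r a ++ w ++ List.replicate v a ∈ Xw X a n w →
      List.replicate r' a ++ w ++ List.replicate v' a ∈ Xw X a n w →
      r = r' ∧ v = v' :=
  Xw_unique_residues_general X a n hcode han w hw
end

section
/- Let X be a code over A with a^n ∈ X, B = A \ {a}, and w ∈ B(a*B)*. Then the set X_w ∪ {a^n} is a code, where X_w = a*wa* ∩ [X* \ (a^n X* ∪ X* a^n)]. -/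
open List

lemma eq_of_replicate_append_eq {A : Type*} {a : A} {r r' : ℕ} {u u' : List A}
    (hu : u.head? ≠ some a) (hu' : u'.head? ≠ some a)
    (h : replicate r a ++ u = replicate r' a ++ u') : r = r' := by
  induction r generalizing r' with
  | zero =>
    cases r' with
    | zero => rfl
    | succ s' =>
      simp only [replicate_zero, nil_append, replicate_succ, cons_append] at h
      simp [h] at hu
  | succ s ih =>
    cases r' with
    | zero =>
      simp only [replicate_zero, nil_append, replicate_succ, cons_append] at h
      simp [← h] at hu'
    | succ s' => simpa using ih (by simpa [replicate_succ] using h)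

section StarOf

variable {A : Type*} {X : Set (List A)}

lemma nil_mem_starOf : ([] : List A) ∈ starOf X := ⟨[], by simp, rfl⟩

lemma subset_starOf : X ⊆ starOf X := fun u hu => ⟨[u], by simpa, by simp⟩

lemma append_mem_starOf {u v : List A} (hu : u ∈ starOf X) (hv : v ∈ starOf X) :
    u ++ v ∈ starOf X := by
  obtain ⟨l, hl, rfl⟩ := hu
  obtain ⟨m, hm, rfl⟩ := hv
  exact ⟨l ++ m, by grind, flatten_append⟩

lemma flatten_mem_starOf {l : List (List A)} (hl : ∀ u ∈ l, u ∈ starOf X) :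
    l.flatten ∈ starOf X := by
  induction l with
  | nil => exact nil_mem_starOf
  | cons u l ih => exact append_mem_starOf (hl u (by simp)) (ih fun v hv => hl v (by simp [hv]))

lemma replicate_mul_mem_starOf {a : A} {n : ℕ} (han : replicate n a ∈ X) (m : ℕ) :
    replicate (n * m) a ∈ starOf X :=
  ⟨replicate m (replicate n a), fun _ hu => eq_of_mem_replicate hu ▸ han, by
    rw [flatten_replicate_replicate, Nat.mul_comm]⟩

end StarOf

namespace IsCode

variable {A : Type*} {X : Set (List A)}

lemma nil_not_mem (hX : IsCode X) : ([] : List A) ∉ X := fun h => by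
  simpa using hX [[]] [] (by simpa) (by simp) (by simp)

lemma replicate_eq_of_mem (hX : IsCode X) {a : A} {p n : ℕ} (hp : replicate p a ∈ X)
    (hn : replicate n a ∈ X) : p = n := by
  have h := hX (replicate n (replicate p a)) (replicate p (replicate n a))
    (fun _ hu => eq_of_mem_replicate hu ▸ hp) (fun _ hu => eq_of_mem_replicate hu ▸ hn)
    (by simp only [flatten_replicate_replicate, Nat.mul_comm])
  simpa using (congrArg length h).symm

lemma dvd_of_replicate_mem_starOf (hX : IsCode X) {a : A} {n k : ℕ} (han : replicate n a ∈ X)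
    (hk : replicate k a ∈ starOf X) : n ∣ k := by
  obtain ⟨l, hl, hflat⟩ := hk
  have hfactors : l = replicate l.length (replicate n a) := by
    refine eq_replicate_of_mem fun z hz => ?_
    have hza : z = replicate z.length a := eq_replicate_of_mem fun c hc =>
      eq_of_mem_replicate (hflat ▸ mem_flatten.mpr ⟨z, hz, hc⟩)
    have hz_len : z.length = n := hX.replicate_eq_of_mem (hza ▸ hl z hz) han
    rw [hza, hz_len]
  rw [hfactors, flatten_replicate_replicate] at hflat
  exact ⟨l.length, by simpa [Nat.mul_comm] using (congrArg length hflat).symm⟩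

lemma exists_eq_append_replicate_of_replicate_mem_starOf (hX : IsCode X) {a : A} {n k : ℕ}
    (han : replicate n a ∈ X) (hk : replicate k a ∈ starOf X) (hk0 : k ≠ 0) :
    ∃ u ∈ starOf X, replicate k a = u ++ replicate n a := by
  obtain ⟨m, rfl⟩ := hX.dvd_of_replicate_mem_starOf han hk
  obtain ⟨j, rfl⟩ := Nat.exists_eq_succ_of_ne_zero (right_ne_zero_of_mul hk0)
  exact ⟨_, replicate_mul_mem_starOf han j, by rw [Nat.mul_succ, replicate_append_replicate]⟩

lemma exists_eq_append_of_append_eq (hX : IsCode X) {p s q t : List A}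
    (hp : p ∈ starOf X) (hs : s ∈ starOf X) (hq : q ∈ starOf X) (ht : t ∈ starOf X)
    (h : p ++ s = q ++ t) : ∃ d ∈ starOf X, q = p ++ d ∨ p = q ++ d := by
  obtain ⟨lp, hlp, rfl⟩ := hp
  obtain ⟨ls, hls, rfl⟩ := hs
  obtain ⟨lq, hlq, rfl⟩ := hq
  obtain ⟨lt, hlt, rfl⟩ := ht
  have hfactors : lp ++ ls = lq ++ lt :=
    hX _ _ (by grind) (by grind) (by simpa using h)
  rcases append_eq_append_iff.mp hfactors with ⟨e, rfl, -⟩ | ⟨e, rfl, -⟩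
  · exact ⟨e.flatten, ⟨e, by grind, rfl⟩, Or.inl flatten_append⟩
  · exact ⟨e.flatten, ⟨e, by grind, rfl⟩, Or.inr flatten_append⟩

theorem of_subset_starOf (hX : IsCode X) {Y : Set (List A)} (hYX : Y ⊆ starOf X)
    (hY : [] ∉ Y) (hprefix : ∀ y ∈ Y, ∀ y' ∈ Y, ∀ d ∈ starOf X, y' = y ++ d → d = []) :
    IsCode Y := by
  have eq_nil : ∀ l : List (List A), (∀ y ∈ l, y ∈ Y) → l.flatten = [] → l = [] :=
    fun l hl h => eq_nil_iff_forall_not_mem.mpr fun y hy =>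
      hY (flatten_eq_nil_iff.mp h y hy ▸ hl y hy)
  intro l m hl hm h
  induction l generalizing m with
  | nil => exact (eq_nil m hm h.symm).symm
  | cons y l ih =>
    cases m with
    | nil => exact eq_nil _ hl h
    | cons y' m =>
      rw [flatten_cons, flatten_cons] at h
      have hy := hl y (by simp)
      have hy' := hm y' (by simp)
      obtain ⟨d, hd, hd'⟩ := hX.exists_eq_append_of_append_eq (hYX hy)
        (flatten_mem_starOf fun u hu => hYX (hl u (by simp [hu]))) (hYX hy')
        (flatten_mem_starOf fun u hu => hYX (hm u (by simp [hu]))) h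
      have hyy' : y = y' := by
        rcases hd' with rfl | rfl
        · rw [hprefix y hy _ hy' d hd rfl, append_nil]
        · rw [hprefix y' hy' _ hy d hd rfl, append_nil]
      subst hyy'
      rw [ih m (fun u hu => hl u (by simp [hu])) (fun u hu => hm u (by simp [hu]))
        (append_cancel_left h)]

end IsCode

section Xw

variable {A : Type*} {X : Set (List A)} {a : A} {n : ℕ} {w : List A}

lemma Xw_subset_starOf : Xw X a n w ⊆ starOf X := fun _ hx => hx.2.1

lemma nil_not_mem_Xw (hw : w ≠ []) : [] ∉ Xw X a n w := by
  rintro ⟨⟨r, v, h⟩, -⟩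
  simp [hw] at h

lemma append_ne_replicate_of_mem_Xw (hw : w ≠ []) (hhead : w.head hw ≠ a) {y : List A}
    (hy : y ∈ Xw X a n w) (d : List A) {k : ℕ} : y ++ d ≠ replicate k a := by
  obtain ⟨⟨r, v, rfl⟩, -⟩ := hy
  intro h
  have hmem : w.head hw ∈ replicate k a := h ▸ by simp [head_mem hw]
  exact hhead (eq_of_mem_replicate hmem)

lemma eq_nil_of_mem_Xw_of_append_eq (hX : IsCode X) (han : replicate n a ∈ X) (hw : w ≠ [])
    (hhead : w.head hw ≠ a) {y y' d : List A} (hy : y ∈ Xw X a n w) (hy' : y' ∈ Xw X a n w)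
    (hd : d ∈ starOf X) (h : y' = y ++ d) : d = [] := by
  obtain ⟨⟨r, v, rfl⟩, hyX, -, -⟩ := hy
  obtain ⟨⟨r', v', rfl⟩, -, -, hy'_not_suffix⟩ := hy'
  have hr : r' = r :=
    eq_of_replicate_append_eq (a := a) (u := w ++ replicate v' a) (u' := w ++ (replicate v a ++ d))
      (by simp [head?_eq_some_head hw, hhead]) (by simp [head?_eq_some_head hw, hhead])
      (by simpa using h)
  subst hr
  have hv : replicate v a ++ d = replicate v' a := by simpa using h.symm
  obtain ⟨k, rfl⟩ : ∃ k, d = replicate k a := ⟨_, (append_eq_replicate_iff.mp hv).2.2⟩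
  by_contra hk
  obtain ⟨u, hu, hku⟩ := hX.exists_eq_append_replicate_of_replicate_mem_starOf han hd
    (by simpa using hk)
  exact hy'_not_suffix ⟨_, append_mem_starOf hyX hu, by simp only [h, hku, append_assoc]⟩

end Xw

theorem Xw_union_an_isCode_general {A : Type*} (X : Set (List A)) (a : A) (n : ℕ)
    (hcode : IsCode X) (han : List.replicate n a ∈ X)
    (w : List A) (hw : w ≠ []) (hhead : w.head hw ≠ a) :
    IsCode (Xw X a n w ∪ {List.replicate n a}) := by
  have hn : n ≠ 0 := by
    rintro rfl
    exact hcode.nil_not_mem han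
  refine hcode.of_subset_starOf
    (Set.union_subset Xw_subset_starOf (Set.singleton_subset_iff.mpr (subset_starOf han))) ?_ ?_
  · rintro (h | h)
    · exact nil_not_mem_Xw hw h
    · exact hn (by simpa using h.symm)
  · rintro y (hy | rfl) y' (hy' | rfl) d hd h
    · exact eq_nil_of_mem_Xw_of_append_eq hcode han hw hhead hy hy' hd h
    · exact absurd h.symm (append_ne_replicate_of_mem_Xw hw hhead hy d)
    · exact absurd ⟨d, hd, h⟩ hy'.2.2.1
    · simpa using h

/-- Let `X` be a code with `a^n ∈ X` and let `w` be a nonempty word whose first and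
last letters differ from `a`.  Then `X_w ∪ {a^n}` is a code. -/
theorem Xw_union_an_isCode {A : Type*} (X : Set (List A)) (a : A) (n : ℕ)
    (hcode : IsCode X) (han : List.replicate n a ∈ X)
    (w : List A) (hw : w ≠ []) (hhead : w.head hw ≠ a) (hlast : w.getLast hw ≠ a) :
    IsCode (Xw X a n w ∪ {List.replicate n a}) :=
  Xw_union_an_isCode_general X a n hcode han w hw hhead
end

section
/- A pair (R,T) of finite subsets of ℕ is a factorization of ℤ/nℤ (i.e., for every z ∈ {0,...,n−1} there is a unique pair (r,t) ∈ R × T with r + t ≡ z mod n) if and only if there exists a finite subset H of ℕ such that, as polynomials in ℤ[a], a^R · a^T = (1 + a + ... + a^{n−1}) + a^H (a^n − 1). -/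
open Polynomial

/-- `(R, T)` is a factorization of `ℤ/nℤ`: every `z ∈ {0, …, n-1}` has a unique
representation `z ≡ r + t (mod n)` with `r ∈ R`, `t ∈ T`. -/
def IsFactorization (n : ℕ) (R T : Finset ℕ) : Prop :=
  ∀ z < n, ∃! p : ℕ × ℕ, p.1 ∈ R ∧ p.2 ∈ T ∧ (p.1 + p.2) % n = z

/-- For a finite set `S ⊆ ℕ`, the polynomial `a^S = Σ_{s ∈ S} a^s ∈ ℤ[a]`. -/
noncomputable def polyOf (S : Finset ℕ) : Polynomial ℤ :=
  ∑ s ∈ S, Polynomial.X ^ s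

/-!
Write `a^R · a^T = Σ_{(r,t)} a^(r+t)` and reduce each monomial modulo `a^n - 1`:
`a^k = a^(k % n) + a^(H_k) (a^n - 1)` with `H_k = {m < k | m ≡ k (mod n)}`. The remainder
`Σ_{(r,t)} a^((r+t) % n)` has degree `< n`, and its coefficient at `z` counts the pairs with
`r + t ≡ z`, so it equals `1 + ⋯ + a^(n-1)` exactly when `(R, T)` is a factorization. In that case
the residues of distinct pairs differ, so the `H_(r+t)` are disjoint and their union is `H`;
conversely, `a^n - 1` divides the difference of two remainders of degree `< n` only if they agree.
-/

open Finset

lemma Finset.existsUnique_mem_and_iff_card_filter {α : Type*} (s : Finset α) (P : α → Prop)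
    [DecidablePred P] : (∃! a, a ∈ s ∧ P a) ↔ #{a ∈ s | P a} = 1 := by
  rw [card_eq_one]
  refine exists_congr fun a => ?_
  simp only [Subset.antisymm_iff, subset_iff, mem_filter, mem_singleton]
  grind

section

variable {A : Type*} [Semiring A]

lemma coeff_sum_X_pow {ι : Type*} (s : Finset ι) (f : ι → ℕ) (z : ℕ) :
    (∑ i ∈ s, (X : A[X]) ^ f i).coeff z = #{i ∈ s | f i = z} := by
  simp [coeff_X_pow, eq_comm]

lemma degree_sum_X_pow_lt [Nontrivial A] {ι : Type*} {s : Finset ι} {f : ι → ℕ} {n : ℕ}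
    (hf : ∀ i ∈ s, f i < n) : (∑ i ∈ s, (X : A[X]) ^ f i).degree < n := by
  refine (degree_sum_le _ _).trans_lt ((Finset.sup_lt_iff (WithBot.bot_lt_coe n)).2 fun i hi => ?_)
  rw [degree_X_pow]
  exact WithBot.coe_lt_coe.2 (hf i hi)

lemma sum_X_pow_eq_sum_range_iff [CharZero A] {ι : Type*} {s : Finset ι} {f : ι → ℕ} {n : ℕ}
    (hf : ∀ i ∈ s, f i < n) :
    ∑ i ∈ s, (X : A[X]) ^ f i = ∑ i ∈ range n, X ^ i ↔ ∀ z < n, #{i ∈ s | f i = z} = 1 := by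
  have hrange (z : ℕ) : (∑ i ∈ range n, (X : A[X]) ^ i).coeff z = if z < n then 1 else 0 := by
    simp [finsetSum_coeff, coeff_X_pow]
  simp only [Polynomial.ext_iff, coeff_sum_X_pow, hrange]
  refine ⟨fun h z hz => by simpa [hz] using h z, fun h z => ?_⟩
  split_ifs with hz
  · simp [h z hz]
  · simp only [Nat.cast_eq_zero, card_eq_zero, filter_eq_empty_iff]
    exact fun i hi hiz => hz (hiz ▸ hf i hi)

end

lemma eq_of_dvd_sub_of_degree_lt {A : Type*} [Ring A] [NoZeroDivisors A] {f p q : A[X]}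
    (h : f ∣ p - q) (hp : p.degree < f.degree) (hq : q.degree < f.degree) : p = q :=
  sub_eq_zero.1 <| eq_zero_of_dvd_of_degree_lt h <| (degree_sub_le p q).trans_lt (max_lt hp hq)

def congrBelow (n k : ℕ) : Finset ℕ :=
  (range (k / n)).image fun j => k % n + n * j

lemma mod_eq_of_mem_congrBelow {n k m : ℕ} (hm : m ∈ congrBelow n k) : m % n = k % n := by
  obtain ⟨j, -, rfl⟩ := mem_image.1 hm
  simp

lemma polyOf_mul (R T : Finset ℕ) :
    polyOf R * polyOf T = ∑ p ∈ R ×ˢ T, (X : ℤ[X]) ^ (p.1 + p.2) := by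
  simp only [polyOf, sum_mul_sum, sum_product, pow_add]

lemma polyOf_biUnion {ι : Type*} [DecidableEq ι] {s : Finset ι} {t : ι → Finset ℕ}
    (h : (s : Set ι).PairwiseDisjoint t) : polyOf (s.biUnion t) = ∑ i ∈ s, polyOf (t i) :=
  sum_biUnion h

lemma X_pow_eq_X_pow_mod_add {n : ℕ} (hn : 0 < n) (k : ℕ) :
    (X : ℤ[X]) ^ k = X ^ (k % n) + polyOf (congrBelow n k) * (X ^ n - 1) := by
  have hinj : Set.InjOn (fun j => k % n + n * j) (range (k / n)) := fun j _ j' _ h =>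
    Nat.eq_of_mul_eq_mul_left hn (Nat.add_left_cancel h)
  have hgeom := geom_sum_mul ((X : ℤ[X]) ^ n) (k / n)
  rw [polyOf, congrBelow, sum_image hinj]
  simp only [pow_add, pow_mul, ← mul_sum, mul_assoc, hgeom]
  rw [mul_sub, ← pow_mul, ← pow_add, Nat.mod_add_div]
  ring

lemma polyOf_mul_eq_sum_mod_add {n : ℕ} (hn : 0 < n) (R T : Finset ℕ) :
    polyOf R * polyOf T = ∑ p ∈ R ×ˢ T, (X : ℤ[X]) ^ ((p.1 + p.2) % n) +
      (∑ p ∈ R ×ˢ T, polyOf (congrBelow n (p.1 + p.2))) * (X ^ n - 1) := by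
  rw [polyOf_mul, sum_mul, ← sum_add_distrib]
  exact sum_congr rfl fun p _ => X_pow_eq_X_pow_mod_add hn _

lemma isFactorization_iff_card {n : ℕ} {R T : Finset ℕ} :
    IsFactorization n R T ↔ ∀ z < n, #{p ∈ R ×ˢ T | (p.1 + p.2) % n = z} = 1 := by
  refine forall₂_congr fun z _ => ?_
  rw [← existsUnique_mem_and_iff_card_filter]
  simp only [mem_product, and_assoc]

lemma IsFactorization.injOn {n : ℕ} {R T : Finset ℕ} (hn : 0 < n) (h : IsFactorization n R T) :
    Set.InjOn (fun p : ℕ × ℕ => (p.1 + p.2) % n) ↑(R ×ˢ T) := by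
  intro p hp q hq hpq
  rw [coe_product, Set.mem_prod] at hp hq
  exact (h _ (Nat.mod_lt _ hn)).unique ⟨hp.1, hp.2, rfl⟩ ⟨hq.1, hq.2, hpq.symm⟩

lemma IsFactorization.pairwiseDisjoint_congrBelow {n : ℕ} {R T : Finset ℕ} (hn : 0 < n)
    (h : IsFactorization n R T) :
    ((R ×ˢ T : Finset (ℕ × ℕ)) : Set (ℕ × ℕ)).PairwiseDisjoint
      fun p => congrBelow n (p.1 + p.2) := by
  intro p hp q hq hpq
  refine disjoint_left.2 fun m hmp hmq => hpq (h.injOn hn hp hq ?_)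
  exact (mod_eq_of_mem_congrBelow hmp).symm.trans (mod_eq_of_mem_congrBelow hmq)

/-- `(R, T)` is a factorization of `ℤ/nℤ` iff there is a finite set `H ⊆ ℕ` with
`a^R · a^T = (1 + a + ⋯ + a^{n-1}) + a^H (a^n − 1)` in `ℤ[a]`. -/
theorem isFactorization_iff_poly (n : ℕ) (hn : 0 < n) (R T : Finset ℕ) :
    IsFactorization n R T ↔
      ∃ H : Finset ℕ,
        polyOf R * polyOf T =
          (∑ i ∈ Finset.range n, (Polynomial.X : Polynomial ℤ) ^ i) +
            polyOf H * (Polynomial.X ^ n - 1) := by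
  have hmod : ∀ p ∈ R ×ˢ T, (p.1 + p.2) % n < n := fun p _ => Nat.mod_lt _ hn
  have hlow := (sum_X_pow_eq_sum_range_iff (A := ℤ) hmod).trans isFactorization_iff_card.symm
  constructor
  · intro h
    refine ⟨(R ×ˢ T).biUnion fun p => congrBelow n (p.1 + p.2), ?_⟩
    rw [polyOf_mul_eq_sum_mod_add hn, hlow.2 h, polyOf_biUnion (h.pairwiseDisjoint_congrBelow hn)]
  · rintro ⟨H, hH⟩
    have hdeg : ((X : ℤ[X]) ^ n - 1).degree = n := by
      simpa using degree_X_pow_sub_C hn (1 : ℤ)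
    refine hlow.1 <| eq_of_dvd_sub_of_degree_lt
      ⟨polyOf H - ∑ p ∈ R ×ˢ T, polyOf (congrBelow n (p.1 + p.2)), ?_⟩
      (hdeg ▸ degree_sum_X_pow_lt hmod) (hdeg ▸ degree_sum_X_pow_lt fun _ => mem_range.1)
    linear_combination hH - polyOf_mul_eq_sum_mod_add hn R T
end

section
/- Let (I,J) be a Krasner factorization of ℤ/nℤ with Card(J) > 1 defined by a chain of divisors of length s > 1. Then J = {0, 1, ..., k₁−1} + J' where k₁ > 1 divides n, all elements of I and J' are divisible by k₁, and (I/k₁, J'/k₁) is a Krasner factorization of ℤ/(n/k₁)ℤ. -/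
/-!
Since `k₁` divides every `k_j` with `j ≥ 1`, every factor of `a^I`, and every factor of `a^J`
except the first one `1 + a + ⋯ + a^(k₁-1)`, is a polynomial in `a^k₁`. Hence `I` consists of
multiples of `k₁`, and whether `j ∈ J` depends only on `j / k₁`, so `J = {0, …, k₁-1} + J'` where
`J'` is the set of multiples of `k₁` in `J`. The unique decompositions `k₁ z = i + j` with
`k₁ z < n` then have `j ∈ J'`; dividing them by `k₁` gives the factorization of `ℤ/(n/k₁)ℤ`.
-/

open Polynomial

/-- `(I, J)` is a Krasner factorization of `ℤ/nℤ`: every `z ∈ {0, …, n-1}` has a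
unique representation `z = i + j` (exact equality in `ℤ`) with `i ∈ I`, `j ∈ J`. -/
def IsKrasnerFactorization (n : ℕ) (I J : Finset ℕ) : Prop :=
  ∀ z < n, ∃! p : ℕ × ℕ, p.1 ∈ I ∧ p.2 ∈ J ∧ p.1 + p.2 = z

/-- `(a^{d·k} − 1)/(a^k − 1) = 1 + a^k + a^{2k} + ⋯ + a^{(d-1)k}`. -/
noncomputable def geomPoly (d k : ℕ) : Polynomial ℤ :=
  ∑ i ∈ Finset.range d, Polynomial.X ^ (i * k)

/-- `a^I = Π_{j even, 1 ≤ j ≤ s} (a^{k_j}−1)/(a^{k_{j−1}}−1)`. -/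
noncomputable def krasnerPolyEven (s : ℕ) (k : ℕ → ℕ) : Polynomial ℤ :=
  ∏ j ∈ Finset.range s,
    if (j + 1) % 2 = 0 then geomPoly (k (j + 1) / k j) (k j) else 1

/-- `a^J = Π_{j odd, 1 ≤ j ≤ s} (a^{k_j}−1)/(a^{k_{j−1}}−1)`. -/
noncomputable def krasnerPolyOdd (s : ℕ) (k : ℕ → ℕ) : Polynomial ℤ :=
  ∏ j ∈ Finset.range s,
    if (j + 1) % 2 = 1 then geomPoly (k (j + 1) / k j) (k j) else 1


lemma dvd_of_forall_dvd_succ {M : Type*} [Monoid M] {k : ℕ → M} {s : ℕ}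
    (hdvd : ∀ j < s, k j ∣ k (j + 1)) {a b : ℕ} (hab : a ≤ b) (hb : b ≤ s) : k a ∣ k b := by
  induction b, hab using Nat.le_induction with
  | base => exact dvd_rfl
  | succ b _ ih => exact (ih (by omega)).trans (hdvd b (by omega))

lemma coeff_polyOf (S : Finset ℕ) (m : ℕ) :
    (polyOf S).coeff m = if m ∈ S then 1 else 0 := by
  simp [polyOf, coeff_X_pow]

lemma geomPoly_mul_eq_expand (d c m : ℕ) :
    geomPoly d (c * m) = expand ℤ c (geomPoly d m) := by
  simp only [geomPoly, map_sum, map_pow, expand_X, ← pow_mul, mul_left_comm]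

lemma coeff_geomPoly_one_mul_expand {c : ℕ} (hc : 0 < c) (F : ℤ[X]) (z : ℕ) :
    (geomPoly c 1 * expand ℤ c F).coeff z = F.coeff (z / c) := by
  simp only [geomPoly, mul_one, Finset.sum_mul, finsetSum_coeff, coeff_X_pow_mul']
  rw [Finset.sum_eq_single (z % c)]
  · rw [if_pos (Nat.mod_le z c), ← Nat.div_mul_self_eq_mod_sub_self, coeff_expand_mul hc]
  · intro u hu hne
    rw [Finset.mem_range] at hu
    split_ifs with hle
    · rw [coeff_expand hc, if_neg]
      rintro ⟨q, hq⟩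
      apply hne
      rw [show z = u + c * q by omega, Nat.add_mul_mod_self_left, Nat.mod_eq_of_lt hu]
    · rfl
  · exact fun h => (h (Finset.mem_range.2 (Nat.mod_lt z hc))).elim

lemma geomPoly_mem_range_expand {c m : ℕ} (h : c ∣ m) (d : ℕ) :
    geomPoly d m ∈ (expand ℤ c).range := by
  obtain ⟨m, rfl⟩ := h
  exact ⟨geomPoly d m, (geomPoly_mul_eq_expand d c m).symm⟩

section KrasnerPoly

variable {s : ℕ} {k : ℕ → ℕ}

lemma krasnerPolyEven_mem_range_expand (hk : ∀ j, 1 ≤ j → j < s → k 1 ∣ k j) :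
    krasnerPolyEven s k ∈ (expand ℤ (k 1)).range := by
  refine Subalgebra.prod_mem _ fun j hj => ?_
  split_ifs with heven
  · exact geomPoly_mem_range_expand (hk j (by omega) (Finset.mem_range.1 hj)) _
  · exact one_mem _

lemma exists_krasnerPolyOdd_eq_geomPoly_mul_expand (hk0 : k 0 = 1) (hs : 0 < s)
    (hk : ∀ j, 1 ≤ j → j < s → k 1 ∣ k j) :
    ∃ F : ℤ[X], krasnerPolyOdd s k = geomPoly (k 1) 1 * expand ℤ (k 1) F := by
  obtain ⟨t, rfl⟩ : ∃ t, s = t + 1 := ⟨s - 1, by omega⟩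
  suffices h : (∏ j ∈ Finset.range t, if (j + 1 + 1) % 2 = 1 then
      geomPoly (k (j + 1 + 1) / k (j + 1)) (k (j + 1)) else 1) ∈ (expand ℤ (k 1)).range by
    obtain ⟨F, hF⟩ := (AlgHom.mem_range _).1 h
    refine ⟨F, ?_⟩
    rw [krasnerPolyOdd, Finset.prod_range_succ', hF, mul_comm]
    simp [hk0]
  refine Subalgebra.prod_mem _ fun j hj => ?_
  split_ifs
  · exact geomPoly_mem_range_expand (hk (j + 1) (by omega) (by simpa using hj)) _
  · exact one_mem _

end KrasnerPoly

lemma dvd_of_mem_of_polyOf_mem_range_expand {c : ℕ} (hc : 0 < c) {S : Finset ℕ}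
    (h : polyOf S ∈ (expand ℤ c).range) {i : ℕ} (hi : i ∈ S) : c ∣ i := by
  obtain ⟨E, hE⟩ := (AlgHom.mem_range _).1 h
  by_contra hci
  have := coeff_polyOf S i
  rw [← hE, coeff_expand hc, if_neg hci, if_pos hi] at this
  exact zero_ne_one this

lemma mem_iff_mul_div_mem_of_polyOf_eq {c : ℕ} (hc : 0 < c) {S : Finset ℕ} {F : ℤ[X]}
    (h : polyOf S = geomPoly c 1 * expand ℤ c F) (j : ℕ) : j ∈ S ↔ c * (j / c) ∈ S := by
  have hcoeff : (polyOf S).coeff j = (polyOf S).coeff (c * (j / c)) := by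
    rw [h, coeff_geomPoly_one_mul_expand hc, coeff_geomPoly_one_mul_expand hc,
      Nat.mul_div_cancel_left _ hc]
  simp only [coeff_polyOf] at hcoeff
  split_ifs at hcoeff <;> simp_all

lemma mem_iff_exists_add_of_mem_iff_mul_div_mem {c : ℕ} (hc : 0 < c) {S : Finset ℕ}
    (hS : ∀ j, j ∈ S ↔ c * (j / c) ∈ S) (j : ℕ) :
    j ∈ S ↔ ∃ u < c, ∃ j' ∈ S.filter (c ∣ ·), j = u + j' := by
  constructor
  · intro hj
    exact ⟨j % c, Nat.mod_lt j hc, c * (j / c),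
      Finset.mem_filter.2 ⟨(hS j).1 hj, dvd_mul_right c _⟩, (Nat.mod_add_div j c).symm⟩
  · rintro ⟨u, hu, j', hj', rfl⟩
    obtain ⟨hj'S, q, rfl⟩ := Finset.mem_filter.1 hj'
    rwa [hS, Nat.add_mul_div_left _ _ hc, Nat.div_eq_of_lt hu, zero_add]

lemma mem_image_div_iff {c : ℕ} (hc : 0 < c) {S : Finset ℕ} (hS : ∀ i ∈ S, c ∣ i) (q : ℕ) :
    q ∈ S.image (· / c) ↔ c * q ∈ S := by
  rw [Finset.mem_image]
  constructor
  · rintro ⟨i, hi, rfl⟩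
    rwa [Nat.mul_div_cancel' (hS i hi)]
  · exact fun h => ⟨c * q, h, Nat.mul_div_cancel_left q hc⟩

lemma IsKrasnerFactorization.image_div {n c : ℕ} {I J : Finset ℕ} (hc : 0 < c)
    (hK : IsKrasnerFactorization n I J) (hI : ∀ i ∈ I, c ∣ i) :
    IsKrasnerFactorization (n / c) (I.image (· / c)) ((J.filter (c ∣ ·)).image (· / c)) := by
  intro z hz
  have hzn : c * z < n := (Nat.mul_lt_mul_of_pos_left hz hc).trans_le (Nat.mul_div_le n c)
  have hJ' : ∀ j ∈ J.filter (c ∣ ·), c ∣ j := fun j hj => (Finset.mem_filter.1 hj).2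
  simp only [mem_image_div_iff hc hI, mem_image_div_iff hc hJ', Finset.mem_filter, dvd_mul_right,
    and_true]
  obtain ⟨⟨i, j⟩, ⟨hi, hj, hij⟩, huniq⟩ := hK (c * z) hzn
  obtain ⟨a, rfl⟩ := hI i hi
  obtain ⟨b, rfl⟩ : c ∣ j := (Nat.dvd_add_right (dvd_mul_right c a)).1 (hij ▸ dvd_mul_right c z)
  refine ⟨(a, b), ⟨hi, hj, Nat.eq_of_mul_eq_mul_left hc (by rw [mul_add]; exact hij)⟩, ?_⟩
  rintro ⟨a', b'⟩ ⟨ha', hb', hab'⟩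
  have := huniq (c * a', c * b') ⟨ha', hb', by rw [← mul_add, hab']⟩
  simp only [Prod.mk.injEq, mul_right_inj' hc.ne'] at this
  rw [this.1, this.2]

theorem krasner_structure_general (n : ℕ) (hn : 0 < n) (I J : Finset ℕ)
    (hK : IsKrasnerFactorization n I J)
    (s : ℕ) (k : ℕ → ℕ) (hs : 1 < s)
    (hk0 : k 0 = 1) (hks : k s = n)
    (hdvd : ∀ j < s, k j ∣ k (j + 1)) (hne : ∀ j < s, k j ≠ k (j + 1))
    (hI : polyOf I = krasnerPolyEven s k) (hJ : polyOf J = krasnerPolyOdd s k) :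
    ∃ J' : Finset ℕ, 1 < k 1 ∧ k 1 ∣ n ∧
      (∀ j : ℕ, j ∈ J ↔ ∃ u < k 1, ∃ j' ∈ J', j = u + j') ∧
      (∀ i ∈ I, k 1 ∣ i) ∧ (∀ j' ∈ J', k 1 ∣ j') ∧
      IsKrasnerFactorization (n / k 1) (I.image (· / k 1)) (J'.image (· / k 1)) := by
  have hk : ∀ j, 1 ≤ j → j < s → k 1 ∣ k j := fun _ h1 hj => dvd_of_forall_dvd_succ hdvd h1 hj.le
  have hk1n : k 1 ∣ n := hks ▸ dvd_of_forall_dvd_succ hdvd (by omega) le_rfl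
  have hk1 : 0 < k 1 := Nat.pos_of_dvd_of_pos hk1n hn
  have hI_dvd : ∀ i ∈ I, k 1 ∣ i := fun _ =>
    dvd_of_mem_of_polyOf_mem_range_expand hk1 (hI ▸ krasnerPolyEven_mem_range_expand hk)
  obtain ⟨F, hF⟩ := exists_krasnerPolyOdd_eq_geomPoly_mul_expand hk0 (by omega) hk
  have hJ_block := mem_iff_mul_div_mem_of_polyOf_eq hk1 (hJ.trans hF)
  refine ⟨J.filter (k 1 ∣ ·), lt_of_le_of_ne hk1 (by simpa [hk0] using hne 0 (by omega)), hk1n,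
    mem_iff_exists_add_of_mem_iff_mul_div_mem hk1 hJ_block, hI_dvd,
    fun j hj => (Finset.mem_filter.1 hj).2, hK.image_div hk1 hI_dvd⟩

/-- Let `(I, J)` be a Krasner factorization of `ℤ/nℤ` with `Card(J) > 1`, defined by
a chain of divisors `1 = k₀ ∣ k₁ ∣ ⋯ ∣ k_s = n` of length `s > 1`.  Then
`J = {0, 1, …, k₁−1} + J'` where `k₁ > 1` divides `n`, all elements of `I` and of
`J'` are divisible by `k₁`, and `(I/k₁, J'/k₁)` is a Krasner factorization of
`ℤ/(n/k₁)ℤ`. -/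
theorem krasner_structure (n : ℕ) (hn : 0 < n) (I J : Finset ℕ)
    (hK : IsKrasnerFactorization n I J) (hJcard : 1 < J.card)
    (s : ℕ) (k : ℕ → ℕ) (hs : 1 < s)
    (hk0 : k 0 = 1) (hks : k s = n)
    (hdvd : ∀ j < s, k j ∣ k (j + 1)) (hne : ∀ j < s, k j ≠ k (j + 1))
    (hI : polyOf I = krasnerPolyEven s k) (hJ : polyOf J = krasnerPolyOdd s k) :
    ∃ J' : Finset ℕ, 1 < k 1 ∧ k 1 ∣ n ∧
      (∀ j : ℕ, j ∈ J ↔ ∃ u < k 1, ∃ j' ∈ J', j = u + j') ∧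
      (∀ i ∈ I, k 1 ∣ i) ∧ (∀ j' ∈ J', k 1 ∣ j') ∧
      IsKrasnerFactorization (n / k 1) (I.image (· / k 1)) (J'.image (· / k 1)) :=
  krasner_structure_general n hn I J hK s k hs hk0 hks hdvd hne hI hJ
end

section
/- Let X ⊆ A* be a finite maximal code containing a^n, and suppose S, P₁, L₁ are finite subsets of A* with underline(A*) = underline(L₁) + underline(S)·underline(X*)·underline(P₁) as formal power series. Set a^R = characteristic series of P₁ ∩ a*, a^T = characteristic series of S ∩ a*. Then (R,T) is a factorization of ℤ/nℤ. Moreover, if L₁ = ∅, then (R,T) is a Krasner factorization of ℤ/nℤ. -/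
/-- The characteristic-series identity `A* = L₁ + S · X* · P₁`:
every word of `A*` is either in `L₁` (and then has no factorization `s x p`),
or has exactly one factorization `s x p` with `s ∈ S`, `x ∈ X*`, `p ∈ P₁`. -/
def SeriesIdentity {A : Type*} (X S P₁ L₁ : Set (List A)) : Prop :=
  ∀ u : List A,
    (u ∈ L₁ ∧ ¬∃ t : List A × List A × List A,
        t.1 ∈ S ∧ t.2.1 ∈ starOf X ∧ t.2.2 ∈ P₁ ∧ u = t.1 ++ t.2.1 ++ t.2.2) ∨
    (u ∉ L₁ ∧ ∃! t : List A × List A × List A,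
        t.1 ∈ S ∧ t.2.1 ∈ starOf X ∧ t.2.2 ∈ P₁ ∧ u = t.1 ++ t.2.1 ++ t.2.2)

private lemma rep_inj {A : Type*} (a : A) {x y : ℕ}
    (h : List.replicate x a = List.replicate y a) : x = y := by
  simpa using congrArg List.length h

private lemma flatten_rep {A : Type*} {l : List (List A)} {a : A} {k : ℕ}
    (hfl : l.flatten = List.replicate k a) (j : ℕ) :
    ((List.replicate j l).flatten).flatten = List.replicate (j * k) a := by
  induction j with
  | zero => simp
  | succ j ih =>
      rw [List.replicate_succ, List.flatten_cons, List.flatten_append, ih, hfl,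
        ← List.replicate_add, Nat.succ_mul, Nat.add_comm]

private lemma flatten_rep_rep {A : Type*} (a : A) (n k : ℕ) :
    (List.replicate k (List.replicate n a)).flatten = List.replicate (k * n) a := by
  induction k with
  | zero => simp
  | succ k ih =>
      rw [List.replicate_succ, List.flatten_cons, ih, ← List.replicate_add,
        Nat.succ_mul, Nat.add_comm]

private lemma mem_starOf_replicate {A : Type*} {X : Set (List A)} {a : A} {n : ℕ}
    (hcode : IsCode X) (han : List.replicate n a ∈ X) (k : ℕ) :
    List.replicate k a ∈ starOf X ↔ n ∣ k := by
  constructor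
  · rintro ⟨l, hl, hfl⟩
    have key := flatten_rep hfl n
    have key2 := flatten_rep_rep a n k
    have heq : ((List.replicate n l).flatten) = List.replicate k (List.replicate n a) := by
      apply hcode
      · intro w hw
        rcases List.mem_flatten.mp hw with ⟨li, hli, hwli⟩
        have : li = l := List.eq_of_mem_replicate hli
        exact hl w (this ▸ hwli)
      · intro w hw
        have : w = List.replicate n a := List.eq_of_mem_replicate hw
        exact this ▸ han
      · rw [key, key2, Nat.mul_comm]
    have hlen := congrArg List.length heq
    simp only [List.length_flatten, List.map_replicate, List.sum_replicate, List.length_replicate,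
      smul_eq_mul] at hlen
    exact ⟨l.length, hlen.symm⟩
  · rintro ⟨j, rfl⟩
    refine ⟨List.replicate j (List.replicate n a), ?_, ?_⟩
    · intro w hw; exact (List.eq_of_mem_replicate hw) ▸ han
    · rw [flatten_rep_rep, Nat.mul_comm]

private lemma rep_split3 {A : Type*} {a : A} {s x p : List A} {m : ℕ}
    (h : List.replicate m a = s ++ x ++ p) :
    s = List.replicate s.length a ∧ x = List.replicate x.length a ∧
    p = List.replicate p.length a ∧ s.length + x.length + p.length = m := by
  have hmem : ∀ b ∈ s ++ x ++ p, b = a := by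
    intro b hb; rw [← h] at hb; exact List.eq_of_mem_replicate hb
  refine ⟨?_, ?_, ?_, ?_⟩
  · exact List.eq_replicate_length.mpr fun b hb => hmem b (by simp [hb])
  · exact List.eq_replicate_length.mpr fun b hb => hmem b (by simp [hb])
  · exact List.eq_replicate_length.mpr fun b hb => hmem b (by simp [hb])
  · have := congrArg List.length h
    simp at this
    omega

/-- Let `X` be a finite maximal code containing `a^n`, and let `S, P₁, L₁` be finite
sets of words with `A* = L₁ + S · X* · P₁` as formal series.  Let
`R = {r : a^r ∈ P₁}` and `T = {t : a^t ∈ S}`.  Then `(R, T)` is a factorization of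
`ℤ/nℤ`, and if moreover `L₁ = ∅` it is a Krasner factorization. -/
theorem factorization_from_series {A : Type*} (a : A) (n : ℕ) (hn : 0 < n)
    (X S P₁ L₁ : Set (List A))
    (hXfin : X.Finite) (hcode : IsCode X)
    (hmax : ∀ Y : Set (List A), IsCode Y → X ⊆ Y → X = Y)
    (han : List.replicate n a ∈ X)
    (hSfin : S.Finite) (hP₁fin : P₁.Finite) (hL₁fin : L₁.Finite)
    (hid : SeriesIdentity X S P₁ L₁) :
    (∀ z < n, ∃! p : ℕ × ℕ,
        List.replicate p.1 a ∈ P₁ ∧ List.replicate p.2 a ∈ S ∧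
        (p.1 + p.2) % n = z) ∧
    (L₁ = ∅ → ∀ z < n, ∃! p : ℕ × ℕ,
        List.replicate p.1 a ∈ P₁ ∧ List.replicate p.2 a ∈ S ∧
        p.1 + p.2 = z) := by
  -- a bound on lengths of words in L₁
  obtain ⟨N, hN⟩ : ∃ N : ℕ, ∀ u ∈ L₁, u.length < N := by
    rcases (hL₁fin.image List.length).bddAbove with ⟨N, hNb⟩
    exact ⟨N + 1, fun u hu => Nat.lt_succ_of_le (hNb (Set.mem_image_of_mem _ hu))⟩
  -- decoding a factorization of a power of a
  have decode : ∀ (m : ℕ) (t : List A × List A × List A),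
      t.1 ∈ S → t.2.1 ∈ starOf X → t.2.2 ∈ P₁ →
      List.replicate m a = t.1 ++ t.2.1 ++ t.2.2 →
      ∃ tt j rr, t = (List.replicate tt a, List.replicate (n * j) a, List.replicate rr a)
        ∧ tt + n * j + rr = m := by
    rintro m ⟨s, x, p⟩ hS hX hP heq
    obtain ⟨hs, hx, hp, hlen⟩ := rep_split3 heq
    rw [hx] at hX
    obtain ⟨j, hj⟩ := (mem_starOf_replicate hcode han x.length).mp hX
    have hlen' : s.length + x.length + p.length = m := hlen
    refine ⟨s.length, j, p.length, ?_, by omega⟩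
    rw [← hj]
    simp only [Prod.mk.injEq]
    exact ⟨hs, hx, hp⟩
  -- key uniqueness claim (mod n)
  have claim : ∀ r t r' t' : ℕ, List.replicate r a ∈ P₁ → List.replicate t a ∈ S →
      List.replicate r' a ∈ P₁ → List.replicate t' a ∈ S →
      (r + t) % n = (r' + t') % n → r = r' ∧ t = t' := by
    intro r t r' t' hr ht hr' ht' hmod
    set c := N + r' + t' + 1 with hc
    set m := r + t + n * c with hm
    have hmge : N ≤ m ∧ r' + t' ≤ m := by
      have h1 : N ≤ n * c := le_trans (by omega) (Nat.le_mul_of_pos_left c hn)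
      have h2 : r' + t' ≤ n * c := le_trans (by omega) (Nat.le_mul_of_pos_left c hn)
      omega
    have hnotL : List.replicate m a ∉ L₁ := fun h => by
      have := hN _ h; simp at this; omega
    rcases hid (List.replicate m a) with ⟨hL, _⟩ | ⟨_, T, hT, huniq⟩
    · exact absurd hL hnotL
    · have hdvd' : n ∣ m - t' - r' := by
        have hle : r' + t' ≤ m := by omega
        have hmn : m % n = (r + t) % n := by
          rw [hm]; exact Nat.add_mul_mod_self_left (r + t) n c
        have heq2 : (r' + t') % n = m % n := by rw [← hmod, hmn]
        have hd := (Nat.modEq_iff_dvd' hle).mp heq2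
        have hsub : m - (r' + t') = m - t' - r' := by omega
        exact hsub ▸ hd
      have h1 : (List.replicate t a, List.replicate (m - t - r) a, List.replicate r a) = T := by
        apply huniq
        refine ⟨ht, ?_, hr, ?_⟩
        · exact (mem_starOf_replicate hcode han _).mpr ⟨c, by omega⟩
        · simp only [← List.replicate_add]; congr 1; omega
      have h2 : (List.replicate t' a, List.replicate (m - t' - r') a, List.replicate r' a) = T := by
        apply huniq
        refine ⟨ht', ?_, hr', ?_⟩
        · exact (mem_starOf_replicate hcode han _).mpr hdvd'
        · simp only [← List.replicate_add]; congr 1; omega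
      rw [← h2] at h1
      simp only [Prod.mk.injEq] at h1
      obtain ⟨e1, _, e3⟩ := h1
      exact ⟨rep_inj a e3, rep_inj a e1⟩
  constructor
  · -- factorization mod n
    intro z hz
    set m := z + n * (N + 1) with hm
    have hnotL : List.replicate m a ∉ L₁ := fun h => by
      have := hN _ h; simp at this
      have : N ≤ n * (N + 1) := le_trans (by omega) (Nat.le_mul_of_pos_left _ hn)
      omega
    rcases hid (List.replicate m a) with ⟨hL, _⟩ | ⟨_, T, hT, _⟩
    · exact absurd hL hnotL
    · obtain ⟨hTS, hTX, hTP, hTeq⟩ := hT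
      obtain ⟨t, j, r, hTval, hsum⟩ := decode m T hTS hTX hTP hTeq
      have hTS' : List.replicate t a ∈ S := by rw [hTval] at hTS; exact hTS
      have hTP' : List.replicate r a ∈ P₁ := by rw [hTval] at hTP; exact hTP
      have hmod : (r + t) % n = z := by
        have h1 : (r + t) % n = (r + t + n * j) % n := (Nat.add_mul_mod_self_left _ n j).symm
        have h2 : (z + n * (N + 1)) % n = z % n := Nat.add_mul_mod_self_left z n (N + 1)
        have h3 : r + t + n * j = z + n * (N + 1) := by omega
        rw [h1, h3, h2, Nat.mod_eq_of_lt hz]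
      refine ⟨(r, t), ⟨hTP', hTS', hmod⟩, ?_⟩
      rintro ⟨r', t'⟩ ⟨hr', ht', hmod'⟩
      obtain ⟨e1, e2⟩ := claim r' t' r t hr' ht' hTP' hTS' (hmod'.trans hmod.symm)
      simp only [Prod.mk.injEq]
      exact ⟨e1, e2⟩
  · -- Krasner factorization when L₁ = ∅
    intro hL₁ z hz
    rcases hid (List.replicate z a) with ⟨hL, _⟩ | ⟨_, T, hT, huniq⟩
    · rw [hL₁] at hL; exact absurd hL (Set.notMem_empty _)
    · obtain ⟨hTS, hTX, hTP, hTeq⟩ := hT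
      obtain ⟨t, j, r, hTval, hsum⟩ := decode z T hTS hTX hTP hTeq
      have hj : j = 0 := by
        by_contra hj0
        have h1 : n ≤ n * j := Nat.le_mul_of_pos_right n (Nat.pos_of_ne_zero hj0)
        omega
      have hTS' : List.replicate t a ∈ S := by rw [hTval] at hTS; exact hTS
      have hTP' : List.replicate r a ∈ P₁ := by rw [hTval] at hTP; exact hTP
      refine ⟨(r, t), ⟨hTP', hTS', by show r + t = z; subst hj; omega⟩, ?_⟩
      rintro ⟨r', t'⟩ ⟨hr', ht', hsum'⟩
      have hq : (List.replicate t' a, List.replicate 0 a, List.replicate r' a) = T := by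
        apply huniq
        refine ⟨ht', (mem_starOf_replicate hcode han 0).mpr ⟨0, by omega⟩, hr', ?_⟩
        simp only [← List.replicate_add]; congr 1; omega
      rw [hTval] at hq
      simp only [Prod.mk.injEq] at hq
      obtain ⟨e1, _, e3⟩ := hq
      have ht2 := rep_inj a e1
      have hr2 := rep_inj a e3
      simp only [Prod.mk.injEq]
      exact ⟨hr2, ht2⟩
end

section
/- Let X be a finite maximal code over A, let a ∈ A have order n (i.e., a^n ∈ X), B = A \ {a}, w ∈ B(a*B)*, and X_w = a*wa* ∩ [X* \ (a^n X* ∪ X* a^n)]. Assuming the set C_a(w) of pairs of residues (i mod n, j mod n) with a^i w a^j ∈ X* has exactly n elements, then Card(X_w) = n. -/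
/-- `C_a(w)`: the set of pairs of residues `(i mod n, j mod n)` such that
`a^i w a^j ∈ X*`. -/
def Ca {A : Type*} (X : Set (List A)) (a : A) (n : ℕ) (w : List A) : Set (ℕ × ℕ) :=
  {p | p.1 < n ∧ p.2 < n ∧ ∃ i j : ℕ, i % n = p.1 ∧ j % n = p.2 ∧
    List.replicate i a ++ w ++ List.replicate j a ∈ starOf X}

lemma no_prefix {A : Type*} {a : A} {w : List A} (hw : w ≠ []) (hhead : w.head hw ≠ a)
    {i j k : ℕ} {y : List A} (hik : i < k)
    (h : List.replicate i a ++ w ++ List.replicate j a = List.replicate k a ++ y) :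
    False := by
  have h' := congrArg (fun l => l[i]?) h
  simp only [List.append_assoc] at h'
  have hr : (List.replicate k a ++ y)[i]? = some a := by
    rw [List.getElem?_append]
    simp [hik, List.getElem?_replicate]
  rw [hr, List.getElem?_append] at h'
  simp only [List.length_replicate, lt_irrefl, if_false, Nat.sub_self] at h'
  rw [List.getElem?_append] at h'
  rw [if_pos (by simpa [List.length_pos_iff] using hw)] at h'
  rw [List.getElem?_eq_getElem (by simpa [List.length_pos_iff] using hw)] at h'
  rw [List.getElem_zero] at h'
  exact hhead (Option.some_injective _ h')

lemma comps_eq {A : Type*} {a : A} {w : List A} (hw : w ≠ []) (hhead : w.head hw ≠ a)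
    {i j i' j' : ℕ}
    (h : List.replicate i a ++ w ++ List.replicate j a
       = List.replicate i' a ++ w ++ List.replicate j' a) : i = i' ∧ j = j' := by
  have hii : i = i' := by
    rcases lt_trichotomy i i' with h1 | h1 | h1
    · exact absurd (by rw [h, List.append_assoc]) (fun hh => no_prefix hw hhead h1 hh)
    · exact h1
    · exact absurd (by rw [← h, List.append_assoc]) (fun hh => no_prefix hw hhead h1 hh)
  refine ⟨hii, ?_⟩
  have := congrArg List.length h
  simp [hii] at this ⊢
  omega

lemma rev_shape {A : Type*} (a : A) (w : List A) (i j : ℕ) :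
    (List.replicate i a ++ w ++ List.replicate j a).reverse
      = List.replicate j a ++ w.reverse ++ List.replicate i a := by
  simp [List.reverse_append, List.reverse_replicate, List.append_assoc]

lemma peel {A : Type*} {a : A} {n : ℕ} {w : List A} (hw : w ≠ []) (hhead : w.head hw ≠ a)
    {i j : ℕ} {y : List A}
    (h : List.replicate i a ++ w ++ List.replicate j a = List.replicate n a ++ y) :
    n ≤ i ∧ y = List.replicate (i - n) a ++ w ++ List.replicate j a := by
  have hni : n ≤ i := by
    by_contra hc
    exact no_prefix hw hhead (by omega) h
  refine ⟨hni, ?_⟩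
  have hrep : List.replicate i a = List.replicate n a ++ List.replicate (i - n) a := by
    rw [← List.replicate_add]; congr 1; omega
  rw [hrep] at h
  simp only [List.append_assoc] at h
  have := List.append_cancel_left h
  rw [← this]; simp [List.append_assoc]

lemma peel_right {A : Type*} {a : A} {n : ℕ} {w : List A} (hw : w ≠ [])
    (hlast : w.getLast hw ≠ a) {i j : ℕ} {y : List A}
    (h : List.replicate i a ++ w ++ List.replicate j a = y ++ List.replicate n a) :
    n ≤ j ∧ y = List.replicate i a ++ w ++ List.replicate (j - n) a := by
  have hwr : w.reverse ≠ [] := by simpa using hw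
  have hhr : w.reverse.head hwr ≠ a := by
    rwa [List.head_reverse]
  have hrev : List.replicate j a ++ w.reverse ++ List.replicate i a
      = List.replicate n a ++ y.reverse := by
    rw [← rev_shape, h]; simp [List.reverse_append, List.reverse_replicate]
  obtain ⟨hnj, hy⟩ := peel hwr hhr hrev
  refine ⟨hnj, ?_⟩
  have : y.reverse.reverse = (List.replicate (j - n) a ++ w.reverse ++ List.replicate i a).reverse := by
    rw [hy]
  simpa [rev_shape, List.reverse_append, List.reverse_replicate, List.append_assoc] using this

lemma flatten_replicate_rep {A : Type*} {a : A} {n : ℕ} (c : ℕ) :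
    (List.replicate c (List.replicate n a)).flatten = List.replicate (c * n) a := by
  induction c with
  | zero => simp
  | succ k ih =>
    rw [List.replicate_succ, List.flatten_cons, ih, Nat.succ_mul, Nat.add_comm,
      List.replicate_add]

lemma tW {A : Type*} [DecidableEq A] {a : A} {w : List A} (hw : w ≠ [])
    (hhead : w.head hw ≠ a) (i j : ℕ) :
    (List.replicate i a ++ w ++ List.replicate j a).takeWhile (fun c => c = a)
      = List.replicate i a := by
  induction i with
  | zero =>
    cases w with
    | nil => exact absurd rfl hw
    | cons h t =>
      have : h ≠ a := by simpa using hhead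
      simp [List.takeWhile_cons, this]
  | succ k ih =>
    rw [List.replicate_succ]
    simp only [List.cons_append, List.takeWhile_cons, decide_eq_true_eq, if_pos rfl]
    rw [ih]
    simp


lemma left_excess {A : Type*} {X : Set (List A)} {a : A} {n : ℕ} {w : List A}
    (hcode : IsCode X) (han : List.replicate n a ∈ X) (hw : w ≠ [])
    {i j i' j' : ℕ}
    (hx : List.replicate i a ++ w ++ List.replicate j a ∈ starOf X)
    (hx' : List.replicate i' a ++ w ++ List.replicate j' a ∈ Xw X a n w)
    (hii : i < i') (hmi : i % n = i' % n) (hmj : j % n = j' % n) : False := by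
  obtain ⟨l, hl, hfl⟩ := hx
  obtain ⟨-, ⟨l', hl', hfl'⟩, hnotleft, -⟩ := hx'
  have hdc : n ∣ i' - i := (Nat.modEq_iff_dvd' (le_of_lt hii)).1 hmi
  obtain ⟨c, hc⟩ := hdc
  rw [Nat.mul_comm] at hc
  have hcpos : 0 < c := Nat.pos_of_ne_zero (fun h => by subst h; simp at hc; omega)
  have hdd : n ∣ max j j' - j := by
    rcases le_total j j' with h | h
    · rw [Nat.max_eq_right h]; exact (Nat.modEq_iff_dvd' h).1 hmj
    · rw [Nat.max_eq_left h]; simp [Nat.sub_eq_zero_of_le h]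
  have hdd' : n ∣ max j j' - j' := by
    rcases le_total j' j with h | h
    · rw [Nat.max_eq_left h]; exact (Nat.modEq_iff_dvd' h).1 hmj.symm
    · rw [Nat.max_eq_right h]; simp [Nat.sub_eq_zero_of_le h]
  obtain ⟨d, hd⟩ := hdd
  rw [Nat.mul_comm] at hd
  obtain ⟨d', hd'⟩ := hdd'
  rw [Nat.mul_comm] at hd'
  have hflatL :
      (List.replicate c (List.replicate n a) ++ l ++ List.replicate d (List.replicate n a)).flatten
        = List.replicate i' a ++ w ++ List.replicate (max j j') a := by
    have e1 : i' = c * n + i := by omega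
    have e2 : max j j' = j + d * n := by omega
    rw [e1, e2]
    simp only [List.flatten_append, flatten_replicate_rep, hfl, List.replicate_add,
      List.append_assoc]
  have hflatL' :
      (l' ++ List.replicate d' (List.replicate n a)).flatten
        = List.replicate i' a ++ w ++ List.replicate (max j j') a := by
    have e2 : max j j' = j' + d' * n := by omega
    rw [e2]
    simp only [List.flatten_append, flatten_replicate_rep, hfl', List.replicate_add,
      List.append_assoc]
  have heq := hcode (List.replicate c (List.replicate n a) ++ l
      ++ List.replicate d (List.replicate n a)) (l' ++ List.replicate d' (List.replicate n a))
    (by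
      intro u hu
      simp only [List.mem_append, List.mem_replicate] at hu
      rcases hu with (hu | hu) | hu
      · rw [hu.2]; exact han
      · exact hl u hu
      · rw [hu.2]; exact han)
    (by
      intro u hu
      simp only [List.mem_append, List.mem_replicate] at hu
      rcases hu with hu | hu
      · exact hl' u hu
      · rw [hu.2]; exact han)
    (by rw [hflatL, hflatL'])
  have hl'ne : l' ≠ [] := by
    intro hnil
    rw [hnil] at hfl'
    have := congrArg List.length hfl'
    simp at this
    exact hw (List.eq_nil_of_length_eq_zero (by omega))
  obtain ⟨u, t, rfl⟩ := List.exists_cons_of_ne_nil hl'ne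
  obtain ⟨c₁, rfl⟩ : ∃ c₁, c = c₁ + 1 := ⟨c - 1, by omega⟩
  rw [List.replicate_succ] at heq
  simp only [List.cons_append] at heq
  injection heq with h1 h2
  apply hnotleft
  refine ⟨t.flatten, ⟨t, fun z hz => hl' z (List.mem_cons_of_mem _ hz), rfl⟩, ?_⟩
  rw [← hfl', h1]
  simp

lemma right_excess {A : Type*} {X : Set (List A)} {a : A} {n : ℕ} {w : List A}
    (hcode : IsCode X) (han : List.replicate n a ∈ X) (hw : w ≠ [])
    {i j i' j' : ℕ}
    (hx : List.replicate i a ++ w ++ List.replicate j a ∈ starOf X)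
    (hx' : List.replicate i' a ++ w ++ List.replicate j' a ∈ Xw X a n w)
    (hjj : j < j') (hmi : i % n = i' % n) (hmj : j % n = j' % n) : False := by
  obtain ⟨l, hl, hfl⟩ := hx
  obtain ⟨-, ⟨l', hl', hfl'⟩, -, hnotright⟩ := hx'
  have hdd : n ∣ j' - j := (Nat.modEq_iff_dvd' (le_of_lt hjj)).1 hmj
  obtain ⟨d, hd⟩ := hdd
  rw [Nat.mul_comm] at hd
  have hdpos : 0 < d := Nat.pos_of_ne_zero (fun h => by subst h; simp at hd; omega)
  have hcc : n ∣ max i i' - i := by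
    rcases le_total i i' with h | h
    · rw [Nat.max_eq_right h]; exact (Nat.modEq_iff_dvd' h).1 hmi
    · rw [Nat.max_eq_left h]; simp [Nat.sub_eq_zero_of_le h]
  have hcc' : n ∣ max i i' - i' := by
    rcases le_total i' i with h | h
    · rw [Nat.max_eq_left h]; exact (Nat.modEq_iff_dvd' h).1 hmi.symm
    · rw [Nat.max_eq_right h]; simp [Nat.sub_eq_zero_of_le h]
  obtain ⟨c, hc⟩ := hcc
  rw [Nat.mul_comm] at hc
  obtain ⟨c', hc'⟩ := hcc'
  rw [Nat.mul_comm] at hc'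
  have hflatL :
      (List.replicate c (List.replicate n a) ++ l ++ List.replicate d (List.replicate n a)).flatten
        = List.replicate (max i i') a ++ w ++ List.replicate j' a := by
    have e1 : max i i' = c * n + i := by omega
    have e2 : j' = j + d * n := by omega
    rw [e1, e2]
    simp only [List.flatten_append, flatten_replicate_rep, hfl, List.replicate_add,
      List.append_assoc]
  have hflatL' :
      (List.replicate c' (List.replicate n a) ++ l').flatten
        = List.replicate (max i i') a ++ w ++ List.replicate j' a := by
    have e1 : max i i' = c' * n + i' := by omega
    rw [e1]
    simp only [List.flatten_append, flatten_replicate_rep, hfl', List.replicate_add,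
      List.append_assoc]
  have heq := hcode (List.replicate c (List.replicate n a) ++ l
      ++ List.replicate d (List.replicate n a)) (List.replicate c' (List.replicate n a) ++ l')
    (by
      intro u hu
      simp only [List.mem_append, List.mem_replicate] at hu
      rcases hu with (hu | hu) | hu
      · rw [hu.2]; exact han
      · exact hl u hu
      · rw [hu.2]; exact han)
    (by
      intro u hu
      simp only [List.mem_append, List.mem_replicate] at hu
      rcases hu with hu | hu
      · rw [hu.2]; exact han
      · exact hl' u hu)
    (by rw [hflatL, hflatL'])
  have hl'ne : l' ≠ [] := by
    intro hnil
    rw [hnil] at hfl'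
    have := congrArg List.length hfl'
    simp at this
    exact hw (List.eq_nil_of_length_eq_zero (by omega))
  -- reverse the list equality
  have heqr := congrArg List.reverse heq
  simp only [List.reverse_append, List.reverse_replicate] at heqr
  have hlr'ne : l'.reverse ≠ [] := by simpa using hl'ne
  obtain ⟨u, t, hut⟩ := List.exists_cons_of_ne_nil hlr'ne
  obtain ⟨d₁, rfl⟩ : ∃ d₁, d = d₁ + 1 := ⟨d - 1, by omega⟩
  rw [List.replicate_succ, hut] at heqr
  simp only [List.cons_append, List.append_assoc] at heqr
  injection heqr with h1 h2
  -- l' = t.reverse ++ [u] with u = replicate n a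
  have hl'eq : l' = t.reverse ++ [List.replicate n a] := by
    rw [h1]
    have := congrArg List.reverse hut
    simpa using this
  apply hnotright
  refine ⟨t.reverse.flatten, ⟨t.reverse, ?_, rfl⟩, ?_⟩
  · intro z hz
    exact hl' z (by rw [hl'eq]; exact List.mem_append_left _ hz)
  · rw [← hfl', hl'eq]
    simp

/-- Let `X` be a finite maximal code with `a` of order `n` and let `w ∈ B(a*B)*`.
If `C_a(w)` has exactly `n` elements, then `Card(X_w) = n`. -/
theorem card_Xw_eq_n {A : Type*} (a : A) (n : ℕ) (X : Set (List A))
    (hXfin : X.Finite) (hcode : IsCode X)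
    (hmax : ∀ Y : Set (List A), IsCode Y → X ⊆ Y → X = Y)
    (han : List.replicate n a ∈ X)
    (w : List A) (hw : w ≠ []) (hhead : w.head hw ≠ a) (hlast : w.getLast hw ≠ a)
    (hCa : (Ca X a n w).Finite ∧ (Ca X a n w).ncard = n) :
    (Xw X a n w).Finite ∧ (Xw X a n w).ncard = n := by
  classical
  have hn : 0 < n := by
    rcases Nat.eq_zero_or_pos n with h | h
    · exfalso
      subst h
      simp only [List.replicate_zero] at han
      have := hcode [[]] [] (by intro u hu; simp at hu; rw [hu]; exact han)
        (by simp) (by simp)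
      simp at this
    · exact h
  set g : List A → ℕ × ℕ := fun x =>
    ((x.takeWhile (fun c => c = a)).length % n,
     (x.reverse.takeWhile (fun c => c = a)).length % n) with hg
  have hwr : w.reverse ≠ [] := by simpa using hw
  have hhr : w.reverse.head hwr ≠ a := by rwa [List.head_reverse]
  have hgval : ∀ r v : ℕ,
      g (List.replicate r a ++ w ++ List.replicate v a) = (r % n, v % n) := by
    intro r v
    have h1 := tW (a := a) hw hhead r v
    have h2 := tW (a := a) hwr hhr v r
    rw [hg]
    simp only [rev_shape, h1, h2, List.length_replicate]
  have hmaps : Set.MapsTo g (Xw X a n w) (Ca X a n w) := by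
    rintro x ⟨⟨r, v, rfl⟩, hstar, -, -⟩
    rw [hgval]
    exact ⟨Nat.mod_lt _ hn, Nat.mod_lt _ hn, r, v, rfl, rfl, hstar⟩
  have hinj : Set.InjOn g (Xw X a n w) := by
    rintro x1 h1 x2 h2 hgeq
    obtain ⟨r1, v1, rfl⟩ := h1.1
    obtain ⟨r2, v2, rfl⟩ := h2.1
    rw [hgval, hgval, Prod.mk.injEq] at hgeq
    obtain ⟨hmr, hmv⟩ := hgeq
    have hr : r1 = r2 := by
      rcases lt_trichotomy r1 r2 with h | h | h
      · exact absurd (left_excess hcode han hw h1.2.1 h2 h hmr hmv) not_false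
      · exact h
      · exact absurd (left_excess hcode han hw h2.2.1 h1 h hmr.symm hmv.symm) not_false
    have hv : v1 = v2 := by
      rcases lt_trichotomy v1 v2 with h | h | h
      · exact absurd (right_excess hcode han hw h1.2.1 h2 h hmr hmv) not_false
      · exact h
      · exact absurd (right_excess hcode han hw h2.2.1 h1 h hmr.symm hmv.symm) not_false
    rw [hr, hv]
  have hsurj : Set.SurjOn g (Xw X a n w) (Ca X a n w) := by
    rintro ⟨p, q⟩ ⟨hp1, hq1, i1, j1, hi1, hj1, hstar1⟩
    have hP : ∃ i, i % n = p ∧ ∃ jj, jj % n = q ∧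
        List.replicate i a ++ w ++ List.replicate jj a ∈ starOf X :=
      ⟨i1, hi1, j1, hj1, hstar1⟩
    obtain ⟨hi₀, hQ⟩ := Nat.find_spec hP
    obtain ⟨hj₀, hstar₀⟩ := Nat.find_spec hQ
    refine ⟨List.replicate (Nat.find hP) a ++ w ++ List.replicate (Nat.find hQ) a,
      ⟨⟨Nat.find hP, Nat.find hQ, rfl⟩, hstar₀, ?_, ?_⟩, ?_⟩
    · rintro ⟨y, hy, hxy⟩
      obtain ⟨hni, rfl⟩ := peel hw hhead hxy
      refine Nat.find_min hP (show Nat.find hP - n < Nat.find hP by omega) ?_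
      refine ⟨?_, Nat.find hQ, hj₀, hy⟩
      have key : ∀ m : ℕ, n ≤ m → (m - n) % n = m % n := by
        intro m hm
        conv_rhs => rw [show m = (m - n) + n by omega]
        rw [Nat.add_mod_right]
      rw [key _ hni, hi₀]
    · rintro ⟨y, hy, hxy⟩
      obtain ⟨hnj, rfl⟩ := peel_right hw hlast hxy
      refine Nat.find_min hQ (show Nat.find hQ - n < Nat.find hQ by omega) ?_
      refine ⟨?_, hy⟩
      have key : ∀ m : ℕ, n ≤ m → (m - n) % n = m % n := by
        intro m hm
        conv_rhs => rw [show m = (m - n) + n by omega]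
        rw [Nat.add_mod_right]
      rw [key _ hnj, hj₀]
    · rw [hgval, hi₀, hj₀]
  have hbij : Set.BijOn g (Xw X a n w) (Ca X a n w) := ⟨hmaps, hinj, hsurj⟩
  have himg : g '' Xw X a n w = Ca X a n w := hbij.image_eq
  constructor
  · exact Set.Finite.of_finite_image (himg ▸ hCa.1) hinj
  · calc (Xw X a n w).ncard = (g '' Xw X a n w).ncard :=
          (Set.ncard_image_of_injOn hinj).symm
      _ = (Ca X a n w).ncard := by rw [himg]
      _ = n := hCa.2
end

section
/- Let X ⊆ A* with a^n ∈ X, B = A \ {a}, and suppose for some word w ∈ B(a*B)* the set W = X_w ∪ {y} ∪ {a^n} with y ∈ a*wa* is a code, where X_w is nonempty and Card(X_w) = n. Then, decomposing W over the prefix code Z = {a, w}, there is a code Y over a two-letter alphabet {c,d} with c^n ∈ Y, Y ⊆ c*dc* ∪ {c^n}, and Card(Y ∩ c*dc*) = n + 1, contradicting the bound Card ≤ n; hence X_w ∪ {a^n} is a maximal code in a*wa* ∪ a*. -/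
/-!
Write `sandwich (p, q) = aᵖ w a^q`, where `w` begins with a letter other than `a`. In a product
`a^c₀ w a^c₁ ⋯ w a^c_k` of `k` sandwiches from a code `C ∋ aⁿ`, inserting factors `aⁿ` changes each
gap `cᵢ` by any multiple of `n`, and erasing the factors `aⁿ` from the resulting factorization
recovers the sandwiches. So two sequences of sandwiches whose gaps agree modulo `n` yield two
factorizations of one word, and unique factorization makes them equal. Hence `m` sandwiches in `C`
give `m ^ k ≤ n ^ (k + 1)` for every `k`, and with `k = n²` Bernoulli's inequality forces `m ≤ n`.
As `X_w` already consists of `n` sandwiches, a code containing `X_w ∪ {aⁿ}` has no further word in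
`a*wa*`; and a code containing `aⁿ` contains no other power of `a`.
-/

open List

theorem List.replicate_append_cons_inj {A : Type*} {b c c' : A} (hc : c ≠ b) (hc' : c' ≠ b) :
    ∀ {e e' : ℕ} {L L' : List A}, replicate e b ++ c :: L = replicate e' b ++ c' :: L' →
      e = e' ∧ c = c' ∧ L = L'
  | 0, 0, _, _, h => by simpa using h
  | 0, _ + 1, _, _, h => absurd (List.cons.inj h).1 hc
  | _ + 1, 0, _, _, h => absurd (List.cons.inj h).1.symm hc'
  | _ + 1, _ + 1, _, _, h => by
    obtain ⟨he, rfl, rfl⟩ := replicate_append_cons_inj hc hc' (List.cons.inj h).2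
    exact ⟨congrArg (· + 1) he, rfl, rfl⟩

theorem Nat.exists_add_mul_eq_add_mul_of_modEq {n x y : ℕ} (h : x ≡ y [MOD n]) :
    ∃ e e', x + n * e = y + n * e' :=
  ⟨y / n, x / n, by
    have := Nat.div_add_mod x n
    have := Nat.div_add_mod y n
    unfold Nat.ModEq at h
    linarith⟩

theorem Nat.pow_mul_self_succ_lt_succ_pow (n : ℕ) (hn : 0 < n) :
    n ^ (n * n + 1) < (n + 1) ^ (n * n) := by
  have bernoulli := pow_add_mul_le_add_pow (a := n) (b := 1) n.zero_le (by omega) (n * n)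
  rw [Nat.cast_id] at bernoulli
  have : n * n * n ^ (n * n - 1) * 1 = n ^ (n * n + 1) := by
    rw [mul_one, mul_assoc, ← _root_.pow_succ',
      Nat.sub_add_cancel (Nat.one_le_iff_ne_zero.mpr (by positivity)), ← _root_.pow_succ']
  have := pow_pos hn (n * n)
  omega

namespace IsCode

variable {A : Type*} {C : Set (List A)}

theorem nil_notMem (hC : IsCode C) : [] ∉ C := fun h =>
  List.cons_ne_nil _ _ (hC [[]] [] (by simpa using h) (by simp) rfl)

theorem pos_of_replicate_mem {a : A} {n : ℕ} (hC : IsCode C) (h : replicate n a ∈ C) :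
    0 < n :=
  Nat.pos_of_ne_zero fun hn => hC.nil_notMem (by simpa [hn] using h)

theorem eq_of_replicate_mem {a : A} {m n : ℕ} (hC : IsCode C) (hm : replicate m a ∈ C)
    (hn : replicate n a ∈ C) : m = n := by
  have h := hC (replicate m (replicate n a)) (replicate n (replicate m a))
    (fun u hu => eq_of_mem_replicate hu ▸ hn) (fun u hu => eq_of_mem_replicate hu ▸ hm)
    (by simp [Nat.mul_comm])
  simpa using congrArg length h

end IsCode

section Sandwich

variable {A : Type*} (a : A) (w : List A)

def sandwich (x : ℕ × ℕ) : List A :=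
  replicate x.1 a ++ w ++ replicate x.2 a

theorem sandwich_injective (hw : w ≠ []) (hhead : w.head hw ≠ a) :
    Function.Injective (sandwich a w) := by
  obtain ⟨b, u, rfl⟩ := exists_cons_of_ne_nil hw
  rintro ⟨p, q⟩ ⟨p', q'⟩ h
  simp only [sandwich, append_assoc, cons_append] at h
  obtain ⟨rfl, -, h⟩ := replicate_append_cons_inj hhead hhead h
  simpa using congrArg length (append_cancel_left h)

theorem sandwich_ne_replicate (hw : w ≠ []) (hhead : w.head hw ≠ a) (x : ℕ × ℕ) (m : ℕ) :
    sandwich a w x ≠ replicate m a := fun h =>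
  have hmem : w.head hw ∈ sandwich a w x := by simp [sandwich, head_mem hw]
  hhead (eq_of_mem_replicate (h ▸ hmem))

/-- `gapSeq c [(p₁, q₁), …, (p_k, q_k)] = [c + p₁, q₁ + p₂, …, q_{k-1} + p_k, q_k]`: the exponents
of the maximal blocks of `a` in `a^c · sandwich (p₁, q₁) ⋯ sandwich (p_k, q_k)`. -/
def gapSeq : ℕ → List (ℕ × ℕ) → List ℕ
  | c, [] => [c]
  | c, x :: L => (c + x.1) :: gapSeq x.2 L

theorem length_gapSeq : ∀ (c : ℕ) (L : List (ℕ × ℕ)), (gapSeq c L).length = L.length + 1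
  | _, [] => rfl
  | _, x :: L => by simp [gapSeq, length_gapSeq x.2 L]

/-- The factorization `(a^n)^{e₁} · sandwich x₁ ⋯ (a^n)^{e_k} · sandwich x_k · (a^n)^{e}` of
`T = [(e₁, x₁), …, (e_k, x_k)]`. -/
def paddedFactors (n : ℕ) : List (ℕ × (ℕ × ℕ)) → ℕ → List (List A)
  | [], e => replicate e (replicate n a)
  | (f, x) :: T, e => replicate f (replicate n a) ++ sandwich a w x :: paddedFactors n T e

variable {a w}

theorem replicate_append_flatten_paddedFactors_nil (n c e : ℕ) :
    replicate c a ++ (paddedFactors a w n [] e).flatten = replicate (c + n * e) a := by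
  simp [paddedFactors, Nat.mul_comm]

theorem replicate_append_flatten_paddedFactors_cons (n c f e : ℕ) (x : ℕ × ℕ)
    (T : List (ℕ × (ℕ × ℕ))) :
    replicate c a ++ (paddedFactors a w n ((f, x) :: T) e).flatten =
      replicate (c + n * f + x.1) a ++ w ++
        (replicate x.2 a ++ (paddedFactors a w n T e).flatten) := by
  simp [paddedFactors, sandwich, Nat.mul_comm, replicate_add, -replicate_append_replicate]

theorem filter_paddedFactors [DecidableEq A] (hw : w ≠ []) (hhead : w.head hw ≠ a) (n e : ℕ) :
    ∀ T : List (ℕ × (ℕ × ℕ)),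
      (paddedFactors a w n T e).filter (· ≠ replicate n a) = (T.map Prod.snd).map (sandwich a w)
  | [] => by simp [paddedFactors]
  | (f, x) :: T => by
    simpa [paddedFactors, filter_append, sandwich_ne_replicate a w hw hhead]
      using filter_paddedFactors hw hhead n e T

theorem forall_mem_paddedFactors {C : Set (List A)} {n : ℕ} (han : replicate n a ∈ C) (e : ℕ) :
    ∀ T : List (ℕ × (ℕ × ℕ)), (∀ x ∈ T, sandwich a w x.2 ∈ C) →
      ∀ u ∈ paddedFactors a w n T e, u ∈ C
  | [], _, u, hu => eq_of_mem_replicate hu ▸ han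
  | (f, x) :: T, hT, u, hu => by
    simp only [paddedFactors, mem_append, mem_cons] at hu
    rcases hu with hu | rfl | hu
    · exact eq_of_mem_replicate hu ▸ han
    · exact hT (f, x) mem_cons_self
    · exact forall_mem_paddedFactors han e T (fun y hy => hT y (mem_cons_of_mem _ hy)) u hu

/-- Padding by powers of `a^n` absorbs any difference of gaps that is divisible by `n`. -/
theorem exists_paddedFactors_eq {n : ℕ} :
    ∀ (L L' : List (ℕ × ℕ)) (c c' : ℕ),
      (gapSeq c L).map (Nat.cast : ℕ → ZMod n) = (gapSeq c' L').map Nat.cast →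
      ∃ T T' e e', T.map Prod.snd = L ∧ T'.map Prod.snd = L' ∧
        replicate c a ++ (paddedFactors a w n T e).flatten =
          replicate c' a ++ (paddedFactors a w n T' e').flatten
  | [], [], c, c', h => by
    obtain ⟨e, e', he⟩ := Nat.exists_add_mul_eq_add_mul_of_modEq
      ((ZMod.natCast_eq_natCast_iff _ _ _).mp (by simpa [gapSeq] using h))
    refine ⟨[], [], e, e', rfl, rfl, ?_⟩
    rw [replicate_append_flatten_paddedFactors_nil, replicate_append_flatten_paddedFactors_nil, he]
  | [], _ :: _, _, _, h | _ :: _, [], _, _, h => by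
    simpa [length_gapSeq] using congrArg length h
  | x :: L, x' :: L', c, c', h => by
    simp only [gapSeq, map_cons, cons.injEq] at h
    obtain ⟨T, T', e, e', rfl, rfl, hT⟩ := exists_paddedFactors_eq L L' x.2 x'.2 h.2
    obtain ⟨f, f', hf⟩ := Nat.exists_add_mul_eq_add_mul_of_modEq
      ((ZMod.natCast_eq_natCast_iff _ _ _).mp h.1)
    refine ⟨(f, x) :: T, (f', x') :: T', e, e', rfl, rfl, ?_⟩
    rw [replicate_append_flatten_paddedFactors_cons, replicate_append_flatten_paddedFactors_cons,
      hT, show c + n * f + x.1 = c' + n * f' + x'.1 by omega]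

end Sandwich

namespace IsCode

variable {A : Type*} {C : Set (List A)} {a : A} {w : List A} {n : ℕ}

theorem eq_of_gapSeq_cast_eq (hC : IsCode C) (hw : w ≠ []) (hhead : w.head hw ≠ a)
    (han : replicate n a ∈ C) {L L' : List (ℕ × ℕ)} (hL : ∀ x ∈ L, sandwich a w x ∈ C)
    (hL' : ∀ x ∈ L', sandwich a w x ∈ C)
    (h : (gapSeq 0 L).map (Nat.cast : ℕ → ZMod n) = (gapSeq 0 L').map Nat.cast) : L = L' := by
  classical
  obtain ⟨T, T', e, e', rfl, rfl, hT⟩ := exists_paddedFactors_eq (a := a) (w := w) L L' 0 0 h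
  have hfactors := hC _ _
    (forall_mem_paddedFactors han e T fun x hx => hL _ (mem_map_of_mem hx))
    (forall_mem_paddedFactors han e' T' fun x hx => hL' _ (mem_map_of_mem hx))
    (by simpa using hT)
  have hfilter := congrArg (filter (· ≠ replicate n a)) hfactors
  rw [filter_paddedFactors hw hhead, filter_paddedFactors hw hhead] at hfilter
  exact map_injective_iff.mpr (sandwich_injective a w hw hhead) hfilter

theorem card_pow_le (hC : IsCode C) (hw : w ≠ []) (hhead : w.head hw ≠ a)
    (han : replicate n a ∈ C) {Q : Set (ℕ × ℕ)} [Finite Q] (hQ : ∀ x ∈ Q, sandwich a w x ∈ C)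
    (k : ℕ) : Nat.card Q ^ k ≤ n ^ (k + 1) := by
  have : NeZero n := ⟨(hC.pos_of_replicate_mem han).ne'⟩
  let gaps (g : Fin k → Q) : List.Vector (ZMod n) (k + 1) :=
    ⟨(gapSeq 0 (ofFn fun j => (g j : ℕ × ℕ))).map Nat.cast, by simp [length_gapSeq]⟩
  have hgaps : Function.Injective gaps := fun g g' h => by
    have hL (g : Fin k → Q) : ∀ x ∈ ofFn fun j => (g j : ℕ × ℕ), sandwich a w x ∈ C := by
      simpa [mem_ofFn] using fun j => hQ _ (g j).2
    have := hC.eq_of_gapSeq_cast_eq hw hhead han (hL g) (hL g') (congrArg Subtype.val h)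
    funext j
    exact Subtype.val_injective (congrFun (ofFn_injective this) j)
  simpa [Nat.card_fun, Nat.card_eq_fintype_card, card_vector] using
    Nat.card_le_card_of_injective gaps hgaps

theorem encard_inter_range_sandwich_le (hC : IsCode C) (hw : w ≠ []) (hhead : w.head hw ≠ a)
    (han : replicate n a ∈ C) : (C ∩ Set.range (sandwich a w)).encard ≤ n := by
  rw [← Set.image_preimage_eq_inter_range, (sandwich_injective a w hw hhead).encard_image]
  by_contra! hlt
  obtain ⟨Q, hQ, hcard⟩ := Set.exists_subset_encard_eq (Order.add_one_le_of_lt hlt)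
  have := (Set.finite_of_encard_eq_coe hcard).to_subtype
  have hQcard : Nat.card Q = n + 1 := by
    rw [Nat.card_coe_set_eq, Set.ncard_def, hcard]; rfl
  have := hC.card_pow_le hw hhead han (fun x hx => hQ hx) (n * n)
  rw [hQcard] at this
  exact this.not_gt (Nat.pow_mul_self_succ_lt_succ_pow n (hC.pos_of_replicate_mem han))

end IsCode

theorem Xw_union_an_maximal_general {A : Type*} (a : A) (n : ℕ) (X : Set (List A))
    (w : List A) (hw : w ≠ []) (hhead : w.head hw ≠ a)
    (hcard : (Xw X a n w).ncard = n) :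
    ∀ C : Set (List A), IsCode C →
      C ⊆ ({x | ∃ r v : ℕ, x = List.replicate r a ++ w ++ List.replicate v a} ∪
            {x | ∃ m : ℕ, x = List.replicate m a}) →
      (Xw X a n w ∪ {List.replicate n a}) ⊆ C →
      C = Xw X a n w ∪ {List.replicate n a} := by
  intro C hC hCsub hWC
  have han : replicate n a ∈ C := hWC (Or.inr rfl)
  refine (hWC.antisymm fun y hyC => ?_).symm
  by_contra hyW
  rcases hCsub hyC with ⟨r, v, hy⟩ | ⟨m, rfl⟩
  · have hfin : (Xw X a n w).Finite :=
      Set.finite_of_ncard_pos (hcard.symm ▸ hC.pos_of_replicate_mem han)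
    have hsub : insert y (Xw X a n w) ⊆ C ∩ Set.range (sandwich a w) := by
      rintro z (rfl | hz)
      · exact ⟨hyC, (r, v), hy.symm⟩
      · obtain ⟨r', v', hz'⟩ := hz.1
        exact ⟨hWC (Or.inl hz), (r', v'), hz'.symm⟩
    have hle := (Set.encard_le_encard hsub).trans (hC.encard_inter_range_sandwich_le hw hhead han)
    rw [Set.encard_insert_of_notMem (fun h => hyW (Or.inl h)), ← hfin.cast_ncard_eq, hcard] at hle
    norm_cast at hle
    omega
  · exact hyW (Or.inr (by rw [hC.eq_of_replicate_mem hyC han]; rfl))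

/-- Let `X ⊆ A*` with `a^n ∈ X` and `w ∈ B(a*B)*` (first and last letter of `w`
differ from `a`), `X_w` nonempty with `Card(X_w) = n`, and suppose `X_w ∪ {a^n}` is
a code.  Adjoining any further word `y ∈ a*wa*` would produce, via decomposition
over the prefix code `{a, w}`, a code over two letters `{c, d}` with `n + 1` words
in `c*dc*` together with `c^n`, contradicting the bound `Card ≤ n`.  Hence
`X_w ∪ {a^n}` is a maximal code in `a*wa* ∪ a*`. -/
theorem Xw_union_an_maximal {A : Type*} (a : A) (n : ℕ) (X : Set (List A))
    (han : List.replicate n a ∈ X)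
    (w : List A) (hw : w ≠ []) (hhead : w.head hw ≠ a) (hlast : w.getLast hw ≠ a)
    (hne : (Xw X a n w).Nonempty)
    (hfin : (Xw X a n w).Finite) (hcard : (Xw X a n w).ncard = n)
    (hcode : IsCode (Xw X a n w ∪ {List.replicate n a})) :
    ∀ C : Set (List A), IsCode C →
      C ⊆ ({x | ∃ r v : ℕ, x = List.replicate r a ++ w ++ List.replicate v a} ∪
            {x | ∃ m : ℕ, x = List.replicate m a}) →
      (Xw X a n w ∪ {List.replicate n a}) ⊆ C →
      C = Xw X a n w ∪ {List.replicate n a} :=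
  Xw_union_an_maximal_general a n X w hw hhead hcard
end
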